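/- arXiv:2509.07599 — 9 statements merged into one kernel-verified Lean document; each statement's English description precedes it below -/
import Mathlib

section
/- For every sufficiently large integer n and every real α with 1000/ln n < α < 1/2, setting b = ⌈n^α⌉, there exists a family 𝒳 of subsets of the universe U_{n,b}, each member of which contains exactly one element of every block, such that |𝒳| ≥ exp((α n ln n)/3200), every X ∈ 𝒳 has |X| = n, and every two distinct X, X' ∈ 𝒳 satisfy |X ∩ X'| ≤ n/400 (i.e., 𝒳 is a design of size exp(αn ln n / 3200)). -/
open Finset

private def dAgree {n b : ℕ} (f g : Fin n → Fin b) : ℕ :=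
  (Finset.univ.filter fun i => f i = g i).card

private lemma dAgree_comm {n b : ℕ} (f g : Fin n → Fin b) : dAgree f g = dAgree g f := by
  unfold dAgree
  congr 1
  ext i
  simp [eq_comm]

private lemma dAgree_self {n b : ℕ} (f : Fin n → Fin b) : dAgree f f = n := by
  simp [dAgree]

private lemma slice_bound {n b : ℕ} (g : Fin n → Fin b) (A : Finset (Fin n)) :
    (Finset.univ.filter fun f : Fin n → Fin b => ∀ i ∈ A, f i = g i).card
      ≤ b ^ (n - A.card) := by
  classical
  have h := Finset.card_le_card_of_injOn
    (f := fun (f : Fin n → Fin b) => fun x : {i : Fin n // i ∉ A} => f x.1)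
    (s := Finset.univ.filter fun f : Fin n → Fin b => ∀ i ∈ A, f i = g i)
    (t := (Finset.univ : Finset ({i : Fin n // i ∉ A} → Fin b)))
    (fun a _ => mem_univ _) ?_
  · refine h.trans_eq ?_
    rw [Finset.card_univ, Fintype.card_fun, Fintype.card_subtype_compl]
    simp
  · intro f1 h1 f2 h2 heq
    simp only [coe_filter, Set.mem_setOf_eq, mem_univ, true_and] at h1 h2
    funext i
    by_cases hi : i ∈ A
    · rw [h1 i hi, h2 i hi]
    · exact congrFun heq ⟨i, hi⟩

private lemma ball_bound {n b k : ℕ} (g : Fin n → Fin b) :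
    (Finset.univ.filter fun f : Fin n → Fin b => k ≤ dAgree f g).card
      ≤ n.choose k * b ^ (n - k) := by
  classical
  have hsub : (Finset.univ.filter fun f : Fin n → Fin b => k ≤ dAgree f g) ⊆
      (Finset.univ.powersetCard k).biUnion
        (fun A => Finset.univ.filter fun f : Fin n → Fin b => ∀ i ∈ A, f i = g i) := by
    intro f hf
    simp only [mem_filter, mem_univ, true_and] at hf
    obtain ⟨A, hA, hAcard⟩ := Finset.exists_subset_card_eq hf
    refine mem_biUnion.mpr ⟨A, mem_powersetCard.mpr ⟨subset_univ A, hAcard⟩, ?_⟩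
    simp only [mem_filter, mem_univ, true_and]
    intro i hi
    exact (mem_filter.mp (hA hi)).2
  calc (Finset.univ.filter fun f : Fin n → Fin b => k ≤ dAgree f g).card
      ≤ _ := card_le_card hsub
    _ ≤ ∑ A ∈ Finset.univ.powersetCard k,
        (Finset.univ.filter fun f : Fin n → Fin b => ∀ i ∈ A, f i = g i).card :=
        card_biUnion_le
    _ ≤ ∑ A ∈ Finset.univ.powersetCard k, b ^ (n - k) := by
        refine sum_le_sum fun A hA => ?_
        have hcard : A.card = k := (mem_powersetCard.mp hA).2
        simpa [hcard] using slice_bound g A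
    _ = n.choose k * b ^ (n - k) := by
        rw [sum_const, smul_eq_mul, Finset.card_powersetCard]
        simp

private lemma design_core {n b t : ℕ} (hn : 1 ≤ n) (ht : t < n) :
    ∃ Y : Finset (Fin n → Fin b),
      (∀ f ∈ Y, ∀ g ∈ Y, f ≠ g → dAgree f g ≤ t) ∧
      b ^ n ≤ Y.card * (n.choose (t + 1) * b ^ (n - (t + 1))) := by
  classical
  set P : Finset (Fin n → Fin b) → Prop :=
    fun Y => ∀ f ∈ Y, ∀ g ∈ Y, f ≠ g → dAgree f g ≤ t with hP
  obtain ⟨Y, hYs, hYmax'⟩ := Finset.exists_maximal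
    (s := (Finset.univ : Finset (Finset (Fin n → Fin b))).filter P)
    ⟨∅, by simp [hP]⟩
  have hYmax : ∀ x ∈ (Finset.univ : Finset (Finset (Fin n → Fin b))).filter P, ¬ Y < x :=
    fun x hx hlt => hlt.not_ge (hYmax' hx hlt.le)
  simp only [mem_filter, mem_univ, true_and] at hYs
  refine ⟨Y, hYs, ?_⟩
  have hcover : ∀ f : Fin n → Fin b, ∃ g ∈ Y, t + 1 ≤ dAgree f g := by
    intro f
    by_cases hf : f ∈ Y
    · exact ⟨f, hf, by rw [dAgree_self]; omega⟩
    · by_contra hcon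
      push_neg at hcon
      have hins : P (insert f Y) := by
        intro a ha c hc hac
        rcases mem_insert.mp ha with ha1 | ha1
        · rcases mem_insert.mp hc with hc1 | hc1
          · exact absurd (ha1.trans hc1.symm) hac
          · subst ha1; have := hcon c hc1; omega
        · rcases mem_insert.mp hc with hc1 | hc1
          · subst hc1; have := hcon a ha1; rw [dAgree_comm]; omega
          · exact hYs a ha1 c hc1 hac
      exact hYmax (insert f Y) (mem_filter.mpr ⟨mem_univ _, hins⟩)
        (Finset.ssubset_insert hf)
  have hsub : (Finset.univ : Finset (Fin n → Fin b)) ⊆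
      Y.biUnion (fun g => Finset.univ.filter fun f => t + 1 ≤ dAgree f g) := by
    intro f _
    obtain ⟨g, hg, hag⟩ := hcover f
    exact mem_biUnion.mpr ⟨g, hg, mem_filter.mpr ⟨mem_univ _, hag⟩⟩
  calc b ^ n = (Finset.univ : Finset (Fin n → Fin b)).card := by
        rw [card_univ, Fintype.card_fun]; simp
    _ ≤ _ := card_le_card hsub
    _ ≤ ∑ g ∈ Y, (Finset.univ.filter fun f => t + 1 ≤ dAgree f g).card :=
        card_biUnion_le
    _ ≤ ∑ _g ∈ Y, n.choose (t + 1) * b ^ (n - (t + 1)) :=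
        sum_le_sum fun g _ => ball_bound g
    _ = Y.card * (n.choose (t + 1) * b ^ (n - (t + 1))) := by
        rw [sum_const, smul_eq_mul]

/-- For every sufficiently large `n` and every real `α` with
`1000 / ln n < α < 1/2`, setting `b = ⌈n^α⌉`, there exists a family `𝒳` of subsets of
the universe `Fin n × Fin b` (the disjoint union of `n` blocks of size `b`), each member
containing exactly one element of every block, with `|𝒳| ≥ exp(α n ln n / 3200)`,
`|X| = n` for every `X ∈ 𝒳`, and `|X ∩ X'| ≤ n / 400` for all distinct `X, X' ∈ 𝒳`. -/
theorem design_exists :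
    ∃ n₀ : ℕ, ∀ n : ℕ, n₀ ≤ n → ∀ α : ℝ,
      1000 / Real.log n < α → α < 1 / 2 →
      ∃ 𝒳 : Finset (Finset (Fin n × Fin ⌈(n : ℝ) ^ α⌉₊)),
        Real.exp (α * n * Real.log n / 3200) ≤ (𝒳.card : ℝ) ∧
        (∀ X ∈ 𝒳, ∀ i : Fin n, (X.filter (fun p => p.1 = i)).card = 1) ∧
        (∀ X ∈ 𝒳, X.card = n) ∧
        (∀ X ∈ 𝒳, ∀ X' ∈ 𝒳, X ≠ X' → ((X ∩ X').card : ℝ) ≤ (n : ℝ) / 400) := by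
  classical
  refine ⟨2, fun n hn α hα1 hα2 => ?_⟩
  have hn1 : (1:ℝ) < n := by exact_mod_cast (by omega : 1 < n)
  have hlog : 0 < Real.log n := Real.log_pos hn1
  have hα1000 : 1000 < α * Real.log n := by
    rw [div_lt_iff₀ hlog] at hα1; exact hα1
  have hα0 : 0 < α := by nlinarith
  set b := ⌈(n : ℝ) ^ α⌉₊ with hbdef
  have hnαpos : (0:ℝ) < (n:ℝ) ^ α := Real.rpow_pos_of_pos (by linarith) α
  have hble : (n:ℝ) ^ α ≤ b := Nat.le_ceil _
  have hb1 : 1 ≤ b := Nat.ceil_pos.mpr hnαpos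
  set t : ℕ := n / 400 with htdef
  have ht : t < n := Nat.div_lt_self (by omega) (by norm_num)
  obtain ⟨Y, hYpair, hYcount⟩ := design_core (b := b) (t := t) (by omega) ht
  -- from the counting inequality to `b ^ (t+1) ≤ Y.card * 2 ^ n`
  have hchoose : n.choose (t + 1) ≤ 2 ^ n := by
    calc n.choose (t + 1) ≤ ∑ m ∈ Finset.range (n + 1), n.choose m :=
        Finset.single_le_sum (fun _ _ => Nat.zero_le _) (Finset.mem_range.mpr (by omega))
      _ = 2 ^ n := Nat.sum_range_choose n
  have hkey : b ^ (t + 1) ≤ Y.card * 2 ^ n := by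
    have hbpos : 0 < b ^ (n - (t + 1)) := pow_pos (by omega) _
    refine Nat.le_of_mul_le_mul_right ?_ hbpos
    calc b ^ (t + 1) * b ^ (n - (t + 1)) = b ^ n := by
          rw [← pow_add]; congr 1; omega
      _ ≤ Y.card * (n.choose (t + 1) * b ^ (n - (t + 1))) := hYcount
      _ ≤ Y.card * (2 ^ n * b ^ (n - (t + 1))) := by
          exact Nat.mul_le_mul_left _ (Nat.mul_le_mul_right _ hchoose)
      _ = Y.card * 2 ^ n * b ^ (n - (t + 1)) := by ring
  -- real-number estimate
  have hYR : Real.exp (α * n * Real.log n / 3200) ≤ (Y.card : ℝ) := by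
    have hc : ((b:ℝ)) ^ (t + 1) ≤ (Y.card : ℝ) * 2 ^ n := by exact_mod_cast hkey
    have ht1 : (n:ℝ) / 400 ≤ (t:ℝ) + 1 := by
      have h1 : n < 400 * (n / 400) + 400 := by omega
      have h2 : (n:ℝ) < 400 * (t:ℝ) + 400 := by exact_mod_cast h1
      linarith
    have h4 : Real.exp (α * ((n:ℝ) / 400) * Real.log n) ≤ ((b:ℝ)) ^ (t + 1) := by
      have h5 : ((n:ℝ) ^ α) ^ (t + 1) ≤ (b:ℝ) ^ (t + 1) :=
        pow_le_pow_left₀ hnαpos.le hble _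
      have h6 : ((n:ℝ) ^ α) ^ (t + 1) = Real.exp (α * ((t:ℝ) + 1) * Real.log n) := by
        rw [← Real.rpow_natCast ((n:ℝ) ^ α) (t + 1), ← Real.rpow_mul (by linarith),
          Real.rpow_def_of_pos (by linarith)]
        push_cast
        ring_nf
      have h7 : Real.exp (α * ((n:ℝ) / 400) * Real.log n)
          ≤ Real.exp (α * ((t:ℝ) + 1) * Real.log n) := by
        apply Real.exp_le_exp.mpr
        have := mul_le_mul_of_nonneg_right (mul_le_mul_of_nonneg_left ht1 hα0.le) hlog.le
        linarith
      rw [h6] at h5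
      exact h7.trans h5
    have h8 : (2:ℝ) ^ n = Real.exp ((n:ℝ) * Real.log 2) := by
      rw [Real.exp_nat_mul, Real.exp_log (by norm_num)]
    have h9 : Real.exp (α * n * Real.log n / 3200)
        ≤ Real.exp (α * ((n:ℝ) / 400) * Real.log n - (n:ℝ) * Real.log 2) := by
      apply Real.exp_le_exp.mpr
      have hlog2 : Real.log 2 < 1 := by
        have := Real.log_two_lt_d9; linarith
      have hn0 : (0:ℝ) ≤ n := by positivity
      nlinarith [mul_le_mul_of_nonneg_left hα1000.le hn0]
    have h10 : Real.exp (α * ((n:ℝ) / 400) * Real.log n - (n:ℝ) * Real.log 2)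
        ≤ (Y.card : ℝ) := by
      rw [Real.exp_sub, div_le_iff₀ (Real.exp_pos _), ← h8]
      exact h4.trans hc
    exact h9.trans h10
  -- construct the family of subsets
  set Φ : (Fin n → Fin b) → Finset (Fin n × Fin b) :=
    fun f => Finset.univ.image (fun i => (i, f i)) with hΦ
  have hmemΦ : ∀ (f : Fin n → Fin b) (p : Fin n × Fin b), p ∈ Φ f ↔ p.2 = f p.1 := by
    intro f p
    simp only [hΦ, mem_image, mem_univ, true_and]
    constructor
    · rintro ⟨i, rfl⟩; rfl
    · intro h; exact ⟨p.1, Prod.ext rfl h.symm⟩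
  have hΦinj : Function.Injective Φ := by
    intro f g hfg
    funext i
    have h1 : (i, f i) ∈ Φ f := (hmemΦ f (i, f i)).mpr rfl
    rw [hfg] at h1
    have h2 := (hmemΦ g (i, f i)).mp h1
    simpa using h2
  have hpairinj : ∀ f : Fin n → Fin b, Function.Injective (fun i => ((i, f i) : Fin n × Fin b)) := by
    intro f i j hij
    exact (Prod.ext_iff.mp hij).1
  refine ⟨Y.image Φ, ?_, ?_, ?_, ?_⟩
  · rw [Finset.card_image_of_injective Y hΦinj]
    exact hYR
  · rintro X hX i
    obtain ⟨f, _, rfl⟩ := mem_image.mp hX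
    have : (Φ f).filter (fun p => p.1 = i) = {(i, f i)} := by
      ext p
      simp only [mem_filter, hmemΦ, mem_singleton, Prod.ext_iff]
      constructor
      · rintro ⟨h1, h2⟩; exact ⟨h2, by rw [h1, h2]⟩
      · rintro ⟨h1, h2⟩; exact ⟨by rw [h2, h1], h1⟩
    rw [this, card_singleton]
  · rintro X hX
    obtain ⟨f, _, rfl⟩ := mem_image.mp hX
    rw [hΦ]
    rw [Finset.card_image_of_injective _ (hpairinj f), card_univ, Fintype.card_fin]
  · rintro X hX X' hX' hne
    obtain ⟨f, hf, rfl⟩ := mem_image.mp hX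
    obtain ⟨g, hg, rfl⟩ := mem_image.mp hX'
    have hfg : f ≠ g := fun h => hne (by rw [h])
    have hint : Φ f ∩ Φ g = (Finset.univ.filter fun i => f i = g i).image
        (fun i => ((i, f i) : Fin n × Fin b)) := by
      ext p
      simp only [mem_inter, hmemΦ, mem_image, mem_filter, mem_univ, true_and]
      constructor
      · rintro ⟨h1, h2⟩
        exact ⟨p.1, h1.symm.trans h2, Prod.ext rfl h1.symm⟩
      · rintro ⟨i, hi, rfl⟩
        exact ⟨rfl, hi⟩
    rw [hint, Finset.card_image_of_injective _ (hpairinj f)]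
    have h1 : dAgree f g ≤ t := hYpair f hf g hg hfg
    have h2 : ((Finset.univ.filter fun i => f i = g i).card : ℝ) ≤ (t : ℝ) := by
      exact_mod_cast h1
    calc ((Finset.univ.filter fun i => f i = g i).card : ℝ) ≤ (t : ℝ) := h2
      _ ≤ (n : ℝ) / 400 := by rw [htdef]; exact_mod_cast Nat.cast_div_le
end

section
/- For every real number δ > 0, it holds that δ − (1 + δ)·ln(1 + δ) ≤ −(δ · ln δ)/2. -/
noncomputable def Faux (x : ℝ) : ℝ :=
  (1 + x) * Real.log (1 + x) - x - (x * Real.log x) / 2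

lemma Faux_continuous : Continuous Faux := by
  have h1 : Continuous fun x : ℝ => (1 + x) * Real.log (1 + x) :=
    Real.continuous_mul_log.comp (continuous_const.add continuous_id)
  exact (h1.sub continuous_id).sub (Real.continuous_mul_log.div_const 2)

lemma Faux_hasDerivAt {x : ℝ} (hx : 0 < x) :
    HasDerivAt Faux (Real.log (1 + x) - Real.log x / 2 - 1 / 2) x := by
  have h1x : (1 : ℝ) + x ≠ 0 := by linarith
  have hu : HasDerivAt (fun y : ℝ => 1 + y) 1 x := (hasDerivAt_id x).const_add 1
  have hlog1 : HasDerivAt (fun y : ℝ => Real.log (1 + y)) (1 / (1 + x)) x := hu.log h1x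
  have h1 : HasDerivAt (fun y : ℝ => (1 + y) * Real.log (1 + y))
      (1 * Real.log (1 + x) + (1 + x) * (1 / (1 + x))) x := hu.mul hlog1
  have hlog2 : HasDerivAt Real.log (1 / x) x := by
    simpa using Real.hasDerivAt_log (ne_of_gt hx)
  have h2 : HasDerivAt (fun y : ℝ => y * Real.log y)
      (1 * Real.log x + x * (1 / x)) x := (hasDerivAt_id x).mul hlog2
  have h := (h1.sub (hasDerivAt_id x)).sub ((h2.div_const 2))
  convert h using 1
  · rfl
  · rfl
  · rfl
  rw [mul_one_div_cancel h1x, mul_one_div_cancel (ne_of_gt hx)]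
  ring

lemma Faux_deriv_nonneg {x : ℝ} (hx : 0 < x) :
    0 ≤ Real.log (1 + x) - Real.log x / 2 - 1 / 2 := by
  have he : Real.exp 1 * x ≤ (1 + x) ^ 2 := by
    nlinarith [Real.exp_one_lt_d9, sq_nonneg (x - 1)]
  have hlog : Real.log (Real.exp 1 * x) ≤ Real.log ((1 + x) ^ 2) :=
    Real.log_le_log (by positivity) he
  rw [Real.log_mul (Real.exp_ne_zero 1) (ne_of_gt hx), Real.log_exp,
    Real.log_pow] at hlog
  push_cast at hlog
  linarith

lemma Faux_mono : MonotoneOn Faux (Set.Ici (0 : ℝ)) := by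
  have hint : interior (Set.Ici (0 : ℝ)) = Set.Ioi 0 := interior_Ici
  apply monotoneOn_of_deriv_nonneg (convex_Ici 0) Faux_continuous.continuousOn
  · rw [hint]
    intro x hx
    exact (Faux_hasDerivAt hx).differentiableAt.differentiableWithinAt
  · rw [hint]
    intro x hx
    rw [(Faux_hasDerivAt hx).deriv]
    exact Faux_deriv_nonneg hx

/-- For every real `δ > 0`,
`δ - (1 + δ) · ln(1 + δ) ≤ -(δ · ln δ) / 2`. -/
theorem delta_log_ineq (δ : ℝ) (hδ : 0 < δ) :
    δ - (1 + δ) * Real.log (1 + δ) ≤ -(δ * Real.log δ) / 2 := by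
  have h0 : Faux 0 = 0 := by simp [Faux]
  have h := Faux_mono (Set.self_mem_Ici) (Set.mem_Ici.mpr hδ.le) hδ.le
  rw [h0] at h
  unfold Faux at h
  linarith
end

section
/- Let U be a finite set, let x_1, …, x_n be a sequence of elements of U, let m ≥ 2 be an integer, and let h : U → Fin m be a random function that is 4-wise independent and uniform. Define F = Σ_{i=1}^n Σ_{j=1}^n 1[h(x_i) = h(x_j)] and F' = (m/(m−1))·(F − n²/m). Then E[F'] = F₂(S), where S = (x_1, …, x_n). -/
open MeasureTheory

/-- Let `U` be a finite set, `x_1, …, x_n ∈ U`, `m ≥ 2`, and let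
`h : U → Fin m` be a random function that is 4-wise independent and uniform
(formalized: for every `j ≤ 4` and every `j` distinct elements of `U`, the joint
distribution of their hash values is uniform on `(Fin m)^j`). With
`F = Σ_i Σ_j 1[h(x_i) = h(x_j)]` and `F' = (m/(m-1))·(F - n²/m)`, we have
`E[F'] = F₂(S) = Σ_i Σ_j 1[x_i = x_j]`. -/
theorem expectation_Fprime_eq_F2
    {Ω : Type*} [MeasurableSpace Ω] (μ : Measure Ω) [IsProbabilityMeasure μ]
    {U : Type*} [Fintype U] [DecidableEq U]
    (n : ℕ) (x : Fin n → U) (m : ℕ) (hm : 2 ≤ m)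
    (h : Ω → U → Fin m)
    (hmeas : ∀ u : U, Measurable (fun ω => h ω u))
    (hindep : ∀ j : ℕ, j ≤ 4 → ∀ u : Fin j → U, Function.Injective u →
      ∀ v : Fin j → Fin m,
        μ {ω | ∀ i : Fin j, h ω (u i) = v i} = 1 / (m : ENNReal) ^ j) :
    ∫ ω, ((m : ℝ) / ((m : ℝ) - 1)) *
        ((∑ i : Fin n, ∑ j : Fin n, if h ω (x i) = h ω (x j) then (1 : ℝ) else 0)
          - (n : ℝ) ^ 2 / m) ∂μ
      = ∑ i : Fin n, ∑ j : Fin n, if x i = x j then (1 : ℝ) else 0 := by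
  have hm2 : (2:ℝ) ≤ (m:ℝ) := by exact_mod_cast hm
  have hm0 : (m:ℝ) ≠ 0 := by linarith
  have hm1 : (m:ℝ) - 1 ≠ 0 := by linarith
  have hmE : (m : ENNReal) ≠ 0 := by
    exact_mod_cast (by omega : m ≠ 0)
  have hmeasset : ∀ a b : U, MeasurableSet {ω | h ω a = h ω b} := fun a b =>
    measurableSet_eq_fun (hmeas a) (hmeas b)
  -- indicator rewrite
  have hind : ∀ a b : U, (fun ω => if h ω a = h ω b then (1:ℝ) else 0)
      = Set.indicator {ω | h ω a = h ω b} (fun _ => (1:ℝ)) := by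
    intro a b; funext ω; simp [Set.indicator_apply, Set.mem_setOf_eq]
  have hInt : ∀ a b : U, Integrable (fun ω => if h ω a = h ω b then (1:ℝ) else 0) μ := by
    intro a b
    rw [hind a b]
    exact (integrable_const (1:ℝ)).indicator (hmeasset a b)
  -- probability h a = h b when a ≠ b
  have hprob : ∀ a b : U, a ≠ b → μ {ω | h ω a = h ω b} = 1 / (m:ENNReal) := by
    intro a b hab
    have hset : {ω | h ω a = h ω b}
        = ⋃ v : Fin m, {ω | ∀ i : Fin 2, h ω (![a,b] i) = ![v,v] i} := by
      ext ω
      simp only [Set.mem_setOf_eq, Set.mem_iUnion, Fin.forall_fin_two]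
      constructor
      · intro hh; exact ⟨h ω b, by simp [hh]⟩
      · rintro ⟨v, h1, h2⟩; simp_all
    have hinj : Function.Injective (![a,b] : Fin 2 → U) := by
      intro i j hij
      fin_cases i <;> fin_cases j <;> simp_all
    have hdisj : Pairwise (Function.onFun Disjoint
        (fun v : Fin m => {ω | ∀ i : Fin 2, h ω (![a,b] i) = ![v,v] i})) := by
      intro v w hvw
      refine Set.disjoint_left.mpr ?_
      intro ω h1 h2
      have e1 := h1 0
      have e2 := h2 0
      simp at e1 e2
      exact hvw (by rw [← e1, ← e2])
    have hms : ∀ v : Fin m,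
        MeasurableSet {ω | ∀ i : Fin 2, h ω (![a,b] i) = ![v,v] i} := by
      intro v
      rw [Set.setOf_forall]
      apply MeasurableSet.iInter
      intro i
      exact (hmeas (![a,b] i)) (measurableSet_singleton (![v,v] i))
    rw [hset, measure_iUnion hdisj hms]
    have heach : ∀ v : Fin m,
        μ {ω | ∀ i : Fin 2, h ω (![a,b] i) = ![v,v] i} = 1 / (m:ENNReal)^2 :=
      fun v => hindep 2 (by norm_num) ![a,b] hinj ![v,v]
    rw [tsum_fintype]
    simp only [heach, Finset.sum_const, Finset.card_univ, Fintype.card_fin, nsmul_eq_mul]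
    rw [one_div, one_div, pow_two, ENNReal.mul_inv (Or.inl hmE) (Or.inl (ENNReal.natCast_ne_top m)),
      ← mul_assoc, ENNReal.mul_inv_cancel hmE (ENNReal.natCast_ne_top m), one_mul]
  -- expectation of each indicator
  have hexp : ∀ a b : U, ∫ ω, (if h ω a = h ω b then (1:ℝ) else 0) ∂μ
      = if a = b then (1:ℝ) else 1/m := by
    intro a b
    by_cases hab : a = b
    · subst hab
      simp [integral_const]
    · rw [hind a b, integral_indicator_const (1:ℝ) (hmeasset a b), measureReal_def, hprob a b hab]
      simp [hab, ENNReal.toReal_inv]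
  -- integrability of the double sum
  have hIntSum : Integrable (fun ω => ∑ i : Fin n, ∑ j : Fin n,
      if h ω (x i) = h ω (x j) then (1:ℝ) else 0) μ := by
    apply integrable_finset_sum
    intro i _
    apply integrable_finset_sum
    intro j _
    exact hInt (x i) (x j)
  rw [integral_const_mul, integral_sub hIntSum (integrable_const _), integral_const,
    integral_finset_sum _ (fun i _ => integrable_finset_sum _ (fun j _ => hInt (x i) (x j)))]
  simp only [integral_finset_sum _ (fun j (_ : j ∈ Finset.univ) => hInt (x _) (x j))]
  simp only [hexp]
  have key : ∀ (p : Prop) [Decidable p],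
      (if p then (1:ℝ) else 1/m) = (1 - 1/m) * (if p then (1:ℝ) else 0) + 1/m := by
    intro p _; split <;> ring
  simp only [key, Finset.sum_add_distrib, ← Finset.mul_sum, Finset.sum_const,
    Finset.card_univ, Fintype.card_fin, nsmul_eq_mul, measure_univ, probReal_univ, ENNReal.toReal_one,
    smul_eq_mul, one_mul]
  field_simp
  ring
end

section
/- Let U be a finite set, let x_1, …, x_n be a sequence of elements of U, let m ≥ 2 be an integer, and let h : U → Fin m be a random function that is 4-wise independent and uniform. Define F = Σ_{i=1}^n Σ_{j=1}^n 1[h(x_i) = h(x_j)]. Then Var(F) ≤ 2·F₂(S)²/m, where S = (x_1, …, x_n). -/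
open MeasureTheory ProbabilityTheory

set_option linter.unusedSectionVars false

section Helpers

variable {Ω : Type*} [MeasurableSpace Ω] {μ : Measure Ω} [IsProbabilityMeasure μ]
    {U : Type*} {m : ℕ} {h : Ω → U → Fin m}

private lemma VarF.atom_meas (hmeas : ∀ u : U, Measurable (fun ω => h ω u)) {j : ℕ}
    (u : Fin j → U) (v : Fin j → Fin m) :
    MeasurableSet {ω | ∀ i, h ω (u i) = v i} := by
  have : {ω | ∀ i, h ω (u i) = v i} = ⋂ i, (fun ω => h ω (u i)) ⁻¹' {v i} := by
    ext ω; simp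
  rw [this]
  exact MeasurableSet.iInter fun i => (hmeas (u i)) (measurableSet_singleton _)

private lemma VarF.pair_meas (hmeas : ∀ u : U, Measurable (fun ω => h ω u)) (a b : U) :
    MeasurableSet {ω | h ω a = h ω b} := by
  have : {ω | h ω a = h ω b} =
      ⋃ v : Fin m, ((fun ω => h ω a) ⁻¹' {v} ∩ (fun ω => h ω b) ⁻¹' {v}) := by
    ext ω
    simp only [Set.mem_setOf_eq, Set.mem_iUnion, Set.mem_inter_iff, Set.mem_preimage,
      Set.mem_singleton_iff]
    exact ⟨fun hh => ⟨h ω b, hh, rfl⟩, fun ⟨v, h1, h2⟩ => h1.trans h2.symm⟩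
  rw [this]
  exact MeasurableSet.iUnion fun v =>
    ((hmeas a) (measurableSet_singleton _)).inter ((hmeas b) (measurableSet_singleton _))

private lemma VarF.union_atoms (hmeas : ∀ u : U, Measurable (fun ω => h ω u))
    {I : Type*} [Fintype I] {j : ℕ}
    (u : Fin j → U) (t : I → Fin j → Fin m) (ht : Function.Injective t)
    (hP : ∀ v : Fin j → Fin m,
      μ {ω | ∀ i : Fin j, h ω (u i) = v i} = 1 / (m : ENNReal) ^ j) :
    μ (⋃ i : I, {ω | ∀ k, h ω (u k) = t i k})
      = (Fintype.card I : ENNReal) / (m : ENNReal) ^ j := by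
  rw [measure_iUnion ?_ (fun i => VarF.atom_meas hmeas u (t i))]
  · simp_rw [hP]
    rw [tsum_fintype, Finset.sum_const, Finset.card_univ, nsmul_eq_mul]
    rw [div_eq_mul_inv, div_eq_mul_inv, one_mul]
  · intro i i' hii'
    simp only [Function.onFun, Set.disjoint_left, Set.mem_setOf_eq]
    intro ω hω hω'
    exact hii' (ht (funext fun k => (hω k).symm.trans (hω' k)))

private lemma VarF.inj2 {a b : U} (hab : a ≠ b) : Function.Injective ![a, b] := by
  intro i j hij
  fin_cases i <;> fin_cases j <;> simp_all

private lemma VarF.inj3 {a b c : U} (hab : a ≠ b) (hac : a ≠ c) (hbc : b ≠ c) :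
    Function.Injective ![a, b, c] := by
  intro i j hij
  fin_cases i <;> fin_cases j <;> simp_all

private lemma VarF.inj4 {a b c d : U} (hab : a ≠ b) (hac : a ≠ c) (had : a ≠ d)
    (hbc : b ≠ c) (hbd : b ≠ d) (hcd : c ≠ d) :
    Function.Injective ![a, b, c, d] := by
  intro i j hij
  fin_cases i <;> fin_cases j <;> simp_all

private lemma VarF.E2 (hmeas : ∀ u : U, Measurable (fun ω => h ω u))
    (hindep : ∀ j : ℕ, j ≤ 4 → ∀ u : Fin j → U, Function.Injective u →
      ∀ v : Fin j → Fin m,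
        μ {ω | ∀ i : Fin j, h ω (u i) = v i} = 1 / (m : ENNReal) ^ j)
    (hm : m ≠ 0) {a b : U} (hab : a ≠ b) :
    (μ {ω | h ω a = h ω b}).toReal = 1 / m := by
  have hset : {ω | h ω a = h ω b}
      = ⋃ v : Fin m, {ω | ∀ k : Fin 2, h ω (![a, b] k) = ![v, v] k} := by
    ext ω
    simp only [Set.mem_setOf_eq, Set.mem_iUnion, Fin.forall_fin_two,
      Matrix.cons_val_zero, Matrix.cons_val_one, Matrix.head_cons]
    exact ⟨fun hh => ⟨h ω b, hh, rfl⟩, fun ⟨v, h1, h2⟩ => h1.trans h2.symm⟩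
  have htinj : Function.Injective (fun v : Fin m => ![v, v]) := by
    intro v w hvw
    simpa using congrFun hvw 0
  rw [hset, VarF.union_atoms hmeas _ _ htinj
    (hindep 2 (by norm_num) _ (VarF.inj2 hab))]
  rw [ENNReal.toReal_div, ENNReal.toReal_pow]
  simp only [Fintype.card_fin, ENNReal.toReal_natCast]
  have hm' : (m : ℝ) ≠ 0 := Nat.cast_ne_zero.mpr hm
  rw [sq]
  field_simp

private lemma VarF.E3 (hmeas : ∀ u : U, Measurable (fun ω => h ω u))
    (hindep : ∀ j : ℕ, j ≤ 4 → ∀ u : Fin j → U, Function.Injective u →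
      ∀ v : Fin j → Fin m,
        μ {ω | ∀ i : Fin j, h ω (u i) = v i} = 1 / (m : ENNReal) ^ j)
    (hm : m ≠ 0) {a b c : U} (hab : a ≠ b) (hac : a ≠ c) (hbc : b ≠ c) :
    (μ {ω | h ω a = h ω b ∧ h ω a = h ω c}).toReal = 1 / (m : ℝ) ^ 2 := by
  have hset : {ω | h ω a = h ω b ∧ h ω a = h ω c}
      = ⋃ v : Fin m, {ω | ∀ k : Fin 3, h ω (![a, b, c] k) = ![v, v, v] k} := by
    ext ω
    simp only [Set.mem_setOf_eq, Set.mem_iUnion]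
    constructor
    · rintro ⟨h1, h2⟩
      refine ⟨h ω a, fun k => ?_⟩
      fin_cases k <;> simp_all
    · rintro ⟨v, hv⟩
      have h0 := hv 0; have h1 := hv 1; have h2 := hv 2
      simp only [Matrix.cons_val_zero, Matrix.cons_val_one, Matrix.head_cons,
        Matrix.cons_val_two, Matrix.tail_cons] at h0 h1 h2
      exact ⟨h0.trans h1.symm, h0.trans h2.symm⟩
  have htinj : Function.Injective (fun v : Fin m => ![v, v, v]) := by
    intro v w hvw
    simpa using congrFun hvw 0
  rw [hset, VarF.union_atoms hmeas _ _ htinj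
    (hindep 3 (by norm_num) _ (VarF.inj3 hab hac hbc))]
  rw [ENNReal.toReal_div, ENNReal.toReal_pow]
  simp only [Fintype.card_fin, ENNReal.toReal_natCast]
  have hm' : (m : ℝ) ≠ 0 := Nat.cast_ne_zero.mpr hm
  field_simp

private lemma VarF.E4 (hmeas : ∀ u : U, Measurable (fun ω => h ω u))
    (hindep : ∀ j : ℕ, j ≤ 4 → ∀ u : Fin j → U, Function.Injective u →
      ∀ v : Fin j → Fin m,
        μ {ω | ∀ i : Fin j, h ω (u i) = v i} = 1 / (m : ENNReal) ^ j)
    (hm : m ≠ 0) {a b c d : U} (hab : a ≠ b) (hac : a ≠ c) (had : a ≠ d)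
    (hbc : b ≠ c) (hbd : b ≠ d) (hcd : c ≠ d) :
    (μ {ω | h ω a = h ω b ∧ h ω c = h ω d}).toReal = 1 / (m : ℝ) ^ 2 := by
  have hset : {ω | h ω a = h ω b ∧ h ω c = h ω d}
      = ⋃ v : Fin m × Fin m,
          {ω | ∀ k : Fin 4, h ω (![a, b, c, d] k) = ![v.1, v.1, v.2, v.2] k} := by
    ext ω
    simp only [Set.mem_setOf_eq, Set.mem_iUnion]
    constructor
    · rintro ⟨h1, h2⟩
      refine ⟨(h ω a, h ω c), fun k => ?_⟩
      fin_cases k <;> simp_all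
    · rintro ⟨v, hv⟩
      have h0 := hv 0; have h1 := hv 1; have h2 := hv 2; have h3 := hv 3
      simp only [Matrix.cons_val_zero, Matrix.cons_val_one, Matrix.head_cons,
        Matrix.cons_val_two, Matrix.tail_cons, Matrix.cons_val_three] at h0 h1 h2 h3
      exact ⟨h0.trans h1.symm, h2.trans h3.symm⟩
  have htinj : Function.Injective
      (fun v : Fin m × Fin m => ![v.1, v.1, v.2, v.2]) := by
    intro v w hvw
    have h0 := congrFun hvw 0
    have h2 := congrFun hvw 2
    simp only [Matrix.cons_val_zero, Matrix.cons_val_two, Matrix.tail_cons,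
      Matrix.head_cons] at h0 h2
    exact Prod.ext h0 h2
  rw [hset, VarF.union_atoms hmeas _ _ htinj
    (hindep 4 (by norm_num) _ (VarF.inj4 hab hac had hbc hbd hcd))]
  rw [ENNReal.toReal_div, ENNReal.toReal_pow]
  simp only [Fintype.card_prod, Fintype.card_fin, Nat.cast_mul, ENNReal.toReal_natCast,
    ENNReal.toReal_mul]
  have hm' : (m : ℝ) ≠ 0 := Nat.cast_ne_zero.mpr hm
  field_simp

private lemma VarF.integral_ite {P : Ω → Prop} [DecidablePred P]
    (hs : MeasurableSet {ω | P ω}) :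
    ∫ ω, (if P ω then (1 : ℝ) else 0) ∂μ = (μ {ω | P ω}).toReal := by
  have heq : (fun ω => if P ω then (1 : ℝ) else 0)
      = Set.indicator {ω | P ω} (fun _ => (1 : ℝ)) := by
    ext ω; by_cases hp : P ω <;> simp [hp, Set.indicator_apply]
  rw [heq, integral_indicator hs]
  simp [measureReal_def]

private lemma VarF.integrable_ite {P : Ω → Prop} [DecidablePred P]
    (hs : MeasurableSet {ω | P ω}) :
    Integrable (fun ω => if P ω then (1 : ℝ) else 0) μ := by
  have heq : (fun ω => if P ω then (1 : ℝ) else 0)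
      = Set.indicator {ω | P ω} (fun _ => (1 : ℝ)) := by
    ext ω; by_cases hp : P ω <;> simp [hp, Set.indicator_apply]
  rw [heq]
  exact (integrable_const 1).indicator hs

private lemma VarF.sumprod {α : Type*} [Fintype α] (f g : α → α → ℝ) :
    ∑ p : α × α, ∑ q : α × α, f p.1 q.1 * g p.2 q.2
      = (∑ i, ∑ k, f i k) * (∑ j, ∑ l, g j l) := by
  have inner : ∀ a b : α, (∑ q : α × α, f a q.1 * g b q.2)
      = (∑ k, f a k) * (∑ l, g b l) := by
    intro a b
    simp only [Fintype.sum_prod_type]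
    rw [Finset.sum_mul_sum]
  simp_rw [inner]
  simp only [Fintype.sum_prod_type]
  rw [Finset.sum_mul_sum]

private lemma VarF.sumprod' {α : Type*} [Fintype α] (f g : α → α → ℝ) :
    ∑ p : α × α, ∑ q : α × α, f p.1 q.2 * g p.2 q.1
      = (∑ i, ∑ l, f i l) * (∑ j, ∑ k, g j k) := by
  have inner : ∀ a b : α, (∑ q : α × α, f a q.2 * g b q.1)
      = (∑ l, f a l) * (∑ k, g b k) := by
    intro a b
    simp only [Fintype.sum_prod_type]
    rw [Finset.sum_comm, Finset.sum_mul_sum]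
  simp_rw [inner]
  simp only [Fintype.sum_prod_type]
  rw [Finset.sum_mul_sum]

end Helpers

/-- Let `U` be a finite set, `x_1, …, x_n ∈ U`, `m ≥ 2`, and let
`h : U → Fin m` be a random function that is 4-wise independent and uniform
(formalized: for every `j ≤ 4` and every `j` distinct elements of `U`, the joint
distribution of their hash values is uniform on `(Fin m)^j`). With
`F = Σ_i Σ_j 1[h(x_i) = h(x_j)]`, we have `Var(F) ≤ 2·F₂(S)²/m`, where
`F₂(S) = Σ_i Σ_j 1[x_i = x_j]`. -/
theorem variance_F_le
    {Ω : Type*} [MeasurableSpace Ω] (μ : Measure Ω) [IsProbabilityMeasure μ]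
    {U : Type*} [Fintype U] [DecidableEq U]
    (n : ℕ) (x : Fin n → U) (m : ℕ) (hm : 2 ≤ m)
    (h : Ω → U → Fin m)
    (hmeas : ∀ u : U, Measurable (fun ω => h ω u))
    (hindep : ∀ j : ℕ, j ≤ 4 → ∀ u : Fin j → U, Function.Injective u →
      ∀ v : Fin j → Fin m,
        μ {ω | ∀ i : Fin j, h ω (u i) = v i} = 1 / (m : ENNReal) ^ j) :
    variance (fun ω =>
        ∑ i : Fin n, ∑ j : Fin n, if h ω (x i) = h ω (x j) then (1 : ℝ) else 0) μ
      ≤ 2 * (∑ i : Fin n, ∑ j : Fin n, if x i = x j then (1 : ℝ) else 0) ^ 2 / m := by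
  classical
  have hm0 : m ≠ 0 := by omega
  have hmpos : (0 : ℝ) < m := by
    have : 0 < m := by omega
    exact_mod_cast this
  set Z : Fin n × Fin n → Ω → ℝ :=
    fun p ω => if h ω (x p.1) = h ω (x p.2) then 1 else 0 with hZdef
  set f : Fin n → Fin n → ℝ := fun i k => if x i = x k then 1 else 0 with hfdef
  set F2 : ℝ := ∑ i : Fin n, ∑ j : Fin n, f i j with hF2def
  have hFrw : (fun ω => ∑ i : Fin n, ∑ j : Fin n,
      if h ω (x i) = h ω (x j) then (1 : ℝ) else 0)
      = fun ω => ∑ p : Fin n × Fin n, Z p ω := by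
    funext ω
    exact (Fintype.sum_prod_type (fun p : Fin n × Fin n => Z p ω)).symm
  rw [hFrw]
  -- basic facts about Z
  have hSmeas : ∀ p : Fin n × Fin n, MeasurableSet {ω | h ω (x p.1) = h ω (x p.2)} :=
    fun p => VarF.pair_meas hmeas _ _
  have hZmeas : ∀ p, Measurable (Z p) :=
    fun p => Measurable.ite (hSmeas p) measurable_const measurable_const
  have hZnn : ∀ p ω, 0 ≤ Z p ω := by
    intro p ω; simp only [hZdef]; split <;> norm_num
  have hZle1 : ∀ p ω, Z p ω ≤ 1 := by
    intro p ω; simp only [hZdef]; split <;> norm_num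
  have hZint : ∀ p, Integrable (Z p) μ := fun p => VarF.integrable_ite (hSmeas p)
  have hPQmeas : ∀ p q : Fin n × Fin n, MeasurableSet
      {ω | h ω (x p.1) = h ω (x p.2) ∧ h ω (x q.1) = h ω (x q.2)} := fun p q =>
    (hSmeas p).inter (hSmeas q)
  have hprodrw : ∀ p q : Fin n × Fin n, (fun ω => Z p ω * Z q ω) = fun ω =>
      if (h ω (x p.1) = h ω (x p.2) ∧ h ω (x q.1) = h ω (x q.2)) then (1 : ℝ) else 0 := by
    intro p q; funext ω; simp only [hZdef]
    by_cases h1 : h ω (x p.1) = h ω (x p.2) <;>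
      by_cases h2 : h ω (x q.1) = h ω (x q.2) <;> simp [h1, h2]
  have hZZint : ∀ p q, Integrable (fun ω => Z p ω * Z q ω) μ := by
    intro p q; rw [hprodrw p q]; exact VarF.integrable_ite (hPQmeas p q)
  have hEZ : ∀ p : Fin n × Fin n, x p.1 ≠ x p.2 → ∫ ω, Z p ω ∂μ = 1 / m := by
    intro p hne
    have h1 : ∫ ω, Z p ω ∂μ
        = (μ {ω | h ω (x p.1) = h ω (x p.2)}).toReal := VarF.integral_ite (hSmeas p)
    rw [h1, VarF.E2 hmeas hindep hm0 hne]
  have hEZZ : ∀ p q : Fin n × Fin n, ∫ ω, Z p ω * Z q ω ∂μ =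
      (μ {ω | h ω (x p.1) = h ω (x p.2) ∧ h ω (x q.1) = h ω (x q.2)}).toReal := by
    intro p q; rw [hprodrw p q]; exact VarF.integral_ite (hPQmeas p q)
  -- L² membership and variance formula
  have hFmeas : Measurable (fun ω => ∑ p : Fin n × Fin n, Z p ω) :=
    Finset.measurable_sum _ (fun p _ => hZmeas p)
  have hFmem : MemLp (fun ω => ∑ p : Fin n × Fin n, Z p ω) 2 μ := by
    refine memLp_of_bounded (a := 0) (b := (Fintype.card (Fin n × Fin n) : ℝ))
      (ae_of_all _ fun ω => ⟨Finset.sum_nonneg fun p _ => hZnn p ω, ?_⟩)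
      hFmeas.aestronglyMeasurable 2
    calc ∑ p : Fin n × Fin n, Z p ω ≤ ∑ _p : Fin n × Fin n, (1 : ℝ) :=
        Finset.sum_le_sum fun p _ => hZle1 p ω
      _ = _ := by simp
  rw [variance_eq_sub hFmem]
  have hint2 : (∫ ω, ((fun ω' => ∑ p : Fin n × Fin n, Z p ω') ^ 2) ω ∂μ)
      = ∑ p : Fin n × Fin n, ∑ q : Fin n × Fin n, ∫ ω, Z p ω * Z q ω ∂μ := by
    have hpt : ∀ ω, ((fun ω' => ∑ p : Fin n × Fin n, Z p ω') ^ 2) ω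
        = ∑ p : Fin n × Fin n, ∑ q : Fin n × Fin n, Z p ω * Z q ω := by
      intro ω
      rw [Pi.pow_apply, sq, Finset.sum_mul_sum]
    simp_rw [hpt]
    rw [integral_finset_sum _ (fun p _ => integrable_finset_sum _ (fun q _ => hZZint p q))]
    exact Finset.sum_congr rfl fun p _ => integral_finset_sum _ fun q _ => hZZint p q
  have hint1 : (∫ ω, (∑ p : Fin n × Fin n, Z p ω) ∂μ)
      = ∑ p : Fin n × Fin n, ∫ ω, Z p ω ∂μ :=
    integral_finset_sum _ fun p _ => hZint p
  rw [hint2, hint1]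
  have expand : (∑ p : Fin n × Fin n, ∫ ω, Z p ω ∂μ) ^ 2
      = ∑ p : Fin n × Fin n, ∑ q : Fin n × Fin n,
          (∫ ω, Z p ω ∂μ) * (∫ ω, Z q ω ∂μ) := by
    rw [sq, Finset.sum_mul_sum]
  rw [expand, ← Finset.sum_sub_distrib]
  simp_rw [← Finset.sum_sub_distrib]
  -- the key pointwise covariance bound
  have key : ∀ p q : Fin n × Fin n,
      (∫ ω, Z p ω * Z q ω ∂μ) - (∫ ω, Z p ω ∂μ) * (∫ ω, Z q ω ∂μ)
        ≤ (f p.1 q.1 * f p.2 q.2 + f p.1 q.2 * f p.2 q.1) / m := by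
    intro p q
    have i1 : (0 : ℝ) ≤ f p.1 q.1 := by simp only [hfdef]; split <;> norm_num
    have i2 : (0 : ℝ) ≤ f p.2 q.2 := by simp only [hfdef]; split <;> norm_num
    have i3 : (0 : ℝ) ≤ f p.1 q.2 := by simp only [hfdef]; split <;> norm_num
    have i4 : (0 : ℝ) ≤ f p.2 q.1 := by simp only [hfdef]; split <;> norm_num
    have hBnn : (0 : ℝ) ≤ (f p.1 q.1 * f p.2 q.2 + f p.1 q.2 * f p.2 q.1) / m :=
      div_nonneg (add_nonneg (mul_nonneg i1 i2) (mul_nonneg i3 i4)) hmpos.le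
    by_cases hab : x p.1 = x p.2
    · have e1 : ∫ ω, Z p ω * Z q ω ∂μ = ∫ ω, Z q ω ∂μ := by
        apply integral_congr_ae
        exact ae_of_all _ fun ω => by simp [hZdef, hab]
      have e2 : ∫ ω, Z p ω ∂μ = 1 := by
        have hz : Z p = fun _ => (1 : ℝ) := funext fun ω => by simp [hZdef, hab]
        rw [hz, integral_const]; simp
      rw [e1, e2, one_mul, sub_self]
      exact hBnn
    by_cases hcd : x q.1 = x q.2
    · have e1 : ∫ ω, Z p ω * Z q ω ∂μ = ∫ ω, Z p ω ∂μ := by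
        apply integral_congr_ae
        exact ae_of_all _ fun ω => by simp [hZdef, hcd]
      have e2 : ∫ ω, Z q ω ∂μ = 1 := by
        have hz : Z q = fun _ => (1 : ℝ) := funext fun ω => by simp [hZdef, hcd]
        rw [hz, integral_const]; simp
      rw [e1, e2, mul_one, sub_self]
      exact hBnn
    have hEp := hEZ p hab
    have hEq := hEZ q hcd
    by_cases hm1 : x p.1 = x q.1 ∧ x p.2 = x q.2
    · have hZZle : ∫ ω, Z p ω * Z q ω ∂μ ≤ ∫ ω, Z p ω ∂μ :=
        integral_mono (hZZint p q) (hZint p)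
          (fun ω => mul_le_of_le_one_right (hZnn p ω) (hZle1 q ω))
      have hnn : 0 ≤ (∫ ω, Z p ω ∂μ) * (∫ ω, Z q ω ∂μ) :=
        mul_nonneg (integral_nonneg fun ω => hZnn p ω)
          (integral_nonneg fun ω => hZnn q ω)
      have hle : (∫ ω, Z p ω * Z q ω ∂μ) - (∫ ω, Z p ω ∂μ) * (∫ ω, Z q ω ∂μ)
          ≤ 1 / m := by
        rw [← hEp]; linarith
      refine hle.trans ?_
      have hf1 : f p.1 q.1 = 1 := by simp [hfdef, hm1.1]
      have hf2 : f p.2 q.2 = 1 := by simp [hfdef, hm1.2]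
      rw [hf1, hf2]
      gcongr
      nlinarith [mul_nonneg i3 i4]
    by_cases hm2 : x p.1 = x q.2 ∧ x p.2 = x q.1
    · have hZZle : ∫ ω, Z p ω * Z q ω ∂μ ≤ ∫ ω, Z p ω ∂μ :=
        integral_mono (hZZint p q) (hZint p)
          (fun ω => mul_le_of_le_one_right (hZnn p ω) (hZle1 q ω))
      have hnn : 0 ≤ (∫ ω, Z p ω ∂μ) * (∫ ω, Z q ω ∂μ) :=
        mul_nonneg (integral_nonneg fun ω => hZnn p ω)
          (integral_nonneg fun ω => hZnn q ω)
      have hle : (∫ ω, Z p ω * Z q ω ∂μ) - (∫ ω, Z p ω ∂μ) * (∫ ω, Z q ω ∂μ)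
          ≤ 1 / m := by
        rw [← hEp]; linarith
      refine hle.trans ?_
      have hf3 : f p.1 q.2 = 1 := by simp [hfdef, hm2.1]
      have hf4 : f p.2 q.1 = 1 := by simp [hfdef, hm2.2]
      rw [hf3, hf4]
      gcongr
      nlinarith [mul_nonneg i1 i2]
    -- exact computation: covariance is zero
    have hprod : ∫ ω, Z p ω * Z q ω ∂μ = 1 / (m : ℝ) ^ 2 := by
      rw [hEZZ p q]
      by_cases hac : x p.1 = x q.1
      · have hbd : x p.2 ≠ x q.2 := fun hh => hm1 ⟨hac, hh⟩
        have had : x p.1 ≠ x q.2 := by rw [hac]; exact hcd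
        have hset : {ω | h ω (x p.1) = h ω (x p.2) ∧ h ω (x q.1) = h ω (x q.2)}
            = {ω | h ω (x p.1) = h ω (x p.2) ∧ h ω (x p.1) = h ω (x q.2)} := by
          rw [← hac]
        rw [hset]
        exact VarF.E3 hmeas hindep hm0 hab had hbd
      by_cases had : x p.1 = x q.2
      · have hbc : x p.2 ≠ x q.1 := fun hh => hm2 ⟨had, hh⟩
        have hset : {ω | h ω (x p.1) = h ω (x p.2) ∧ h ω (x q.1) = h ω (x q.2)}
            = {ω | h ω (x p.1) = h ω (x p.2) ∧ h ω (x p.1) = h ω (x q.1)} := by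
          ext ω
          simp only [Set.mem_setOf_eq]
          rw [← had]
          exact and_congr_right fun _ => eq_comm
        rw [hset]
        exact VarF.E3 hmeas hindep hm0 hab hac hbc
      by_cases hbc : x p.2 = x q.1
      · have hbd : x p.2 ≠ x q.2 := by rw [hbc]; exact hcd
        have hset : {ω | h ω (x p.1) = h ω (x p.2) ∧ h ω (x q.1) = h ω (x q.2)}
            = {ω | h ω (x p.2) = h ω (x p.1) ∧ h ω (x p.2) = h ω (x q.2)} := by
          ext ω
          simp only [Set.mem_setOf_eq]
          rw [← hbc]
          exact and_congr_left fun _ => eq_comm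
        rw [hset]
        exact VarF.E3 hmeas hindep hm0 (Ne.symm hab) hbd had
      by_cases hbd : x p.2 = x q.2
      · have hset : {ω | h ω (x p.1) = h ω (x p.2) ∧ h ω (x q.1) = h ω (x q.2)}
            = {ω | h ω (x p.2) = h ω (x p.1) ∧ h ω (x p.2) = h ω (x q.1)} := by
          ext ω
          simp only [Set.mem_setOf_eq]
          rw [← hbd]
          exact and_congr eq_comm eq_comm
        rw [hset]
        exact VarF.E3 hmeas hindep hm0 (Ne.symm hab) (fun hh => hbc hh) hac
      · exact VarF.E4 hmeas hindep hm0 hab hac had hbc hbd hcd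
    rw [hprod, hEp, hEq]
    have hzero : 1 / (m : ℝ) ^ 2 - 1 / m * (1 / m) = 0 := by ring
    rw [hzero]
    exact hBnn
  -- sum the bound
  calc (∑ p : Fin n × Fin n, ∑ q : Fin n × Fin n,
        ((∫ ω, Z p ω * Z q ω ∂μ) - (∫ ω, Z p ω ∂μ) * (∫ ω, Z q ω ∂μ)))
      ≤ ∑ p : Fin n × Fin n, ∑ q : Fin n × Fin n,
          (f p.1 q.1 * f p.2 q.2 + f p.1 q.2 * f p.2 q.1) / m :=
        Finset.sum_le_sum fun p _ => Finset.sum_le_sum fun q _ => key p q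
    _ = 2 * F2 ^ 2 / m := by
        simp_rw [add_div, Finset.sum_add_distrib, ← Finset.sum_div]
        rw [VarF.sumprod f f, VarF.sumprod' f f]
        rw [← hF2def]
        ring
end

section
/- Let k and n be positive integers with k dividing n, and let x, y ∈ {0,1}^k. Define A' = ⋃_{i=0}^{k−1} { x_i·n + i·(n/k) + t : 0 ≤ t < n/k } and B' = ⋃_{i=0}^{k−1} { y_i·n + i·(n/k) + t : 0 ≤ t < n/k }, as subsets of the natural numbers. Then A', B' ⊆ {0, 1, …, 2n−1}, |A'| = |B'| = n, and |A' ∩ B'| = n − (n/k)·Δ(x, y), where Δ(x, y) = |{ i : x_i ≠ y_i }| is the Hamming distance. -/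
def blowup (k n : ℕ) (x : Fin k → Bool) : Finset ℕ :=
  Finset.univ.biUnion fun i : Fin k =>
    (Finset.range (n / k)).image fun t => (cond (x i) n 0) + (i : ℕ) * (n / k) + t

lemma aux_dec (m i j t s : ℕ) (ht : t < m) (hs : s < m) (h : i*m+t = j*m+s) :
    i = j ∧ t = s := by
  have hij : i = j := by
    rcases Nat.lt_trichotomy i j with h'|h'|h'
    · nlinarith
    · exact h'
    · nlinarith
  subst hij; omega

lemma decode (k m : ℕ) (b c : Bool) (i j t s : ℕ) (hi : i < k) (hj : j < k)
    (ht : t < m) (hs : s < m)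
    (h : cond b (k*m) 0 + i*m + t = cond c (k*m) 0 + j*m + s) :
    b = c ∧ i = j ∧ t = s := by
  have h1 : i*m+t < k*m := by nlinarith
  have h2 : j*m+s < k*m := by nlinarith
  have hbc : b = c := by cases b <;> cases c <;> simp at h ⊢ <;> omega
  subst hbc
  have h' : i*m+t = j*m+s := by cases b <;> simp at h <;> omega
  exact ⟨rfl, aux_dec m i j t s ht hs h'⟩

lemma card_blowup (k m : ℕ) (hk : 0 < k) (x : Fin k → Bool) :
    (blowup k (k*m) x).card = k*m := by
  have hdiv : k*m/k = m := Nat.mul_div_cancel_left m hk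
  unfold blowup
  rw [hdiv, Finset.card_biUnion]
  · rw [Finset.sum_congr rfl (fun i _ => Finset.card_image_of_injective _
      (add_right_injective _))]
    simp [Finset.card_range, mul_comm]
  · intro i _ j _ hij
    rw [Function.onFun, Finset.disjoint_left]
    rintro v hv hv'
    simp only [Finset.mem_image, Finset.mem_range] at hv hv'
    obtain ⟨t, ht, rfl⟩ := hv
    obtain ⟨s, hs, h⟩ := hv'
    obtain ⟨-, hij', -⟩ := decode k m (x j) (x i) (j:ℕ) (i:ℕ) s t j.isLt i.isLt hs ht h
    exact hij (Fin.ext hij'.symm)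

/-- For `k ∣ n` and `x, y ∈ {0,1}^k`, the blow-up sets
`A' = blowup k n x` and `B' = blowup k n y` satisfy `A', B' ⊆ {0, …, 2n-1}`,
`|A'| = |B'| = n`, and `|A' ∩ B'| = n - (n/k)·Δ(x,y)` where `Δ` is the Hamming
distance. -/
theorem blowup_intersection (k n : ℕ) (hk : 0 < k) (hn : 0 < n) (hdvd : k ∣ n)
    (x y : Fin k → Bool) :
    blowup k n x ⊆ Finset.range (2 * n) ∧
    blowup k n y ⊆ Finset.range (2 * n) ∧
    (blowup k n x).card = n ∧
    (blowup k n y).card = n ∧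
    ((blowup k n x ∩ blowup k n y).card : ℤ) =
      (n : ℤ) - (n / k : ℕ) * ((Finset.univ.filter fun i : Fin k => x i ≠ y i).card : ℤ) := by
  obtain ⟨m, rfl⟩ := hdvd
  have hdiv : k*m/k = m := Nat.mul_div_cancel_left m hk
  have hsub : ∀ z : Fin k → Bool, blowup k (k*m) z ⊆ Finset.range (2*(k*m)) := by
    intro z v hv
    simp only [blowup, hdiv, Finset.mem_biUnion, Finset.mem_image, Finset.mem_range] at hv ⊢
    obtain ⟨i, -, t, ht, rfl⟩ := hv
    have hi : (i:ℕ) < k := i.isLt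
    cases z i <;> simp <;> nlinarith
  refine ⟨hsub x, hsub y, card_blowup k m hk x, card_blowup k m hk y, ?_⟩
  have hint : blowup k (k*m) x ∩ blowup k (k*m) y =
      (Finset.univ.filter fun i : Fin k => x i = y i).biUnion
        (fun i => (Finset.range m).image fun t => (cond (x i) (k*m) 0) + (i:ℕ)*m + t) := by
    ext v
    simp only [blowup, hdiv, Finset.mem_inter, Finset.mem_biUnion, Finset.mem_image,
      Finset.mem_range, Finset.mem_filter, Finset.mem_univ, true_and]
    constructor
    · rintro ⟨⟨i, t, ht, rfl⟩, ⟨j, s, hs, h⟩⟩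
      obtain ⟨hb, hij, -⟩ := decode k m (y j) (x i) (j:ℕ) (i:ℕ) s t j.isLt i.isLt hs ht h
      have : j = i := Fin.ext hij
      subst this
      exact ⟨j, hb.symm, t, ht, rfl⟩
    · rintro ⟨i, hxy, t, ht, rfl⟩
      exact ⟨⟨i, t, ht, rfl⟩, ⟨i, t, ht, by rw [hxy]⟩⟩
  rw [hint, Finset.card_biUnion]
  · have hcard : ∑ i ∈ Finset.univ.filter (fun i : Fin k => x i = y i),
        ((Finset.range m).image fun t => (cond (x i) (k*m) 0) + (i:ℕ)*m + t).card =
        m * (Finset.univ.filter fun i : Fin k => x i = y i).card := by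
      rw [Finset.sum_congr rfl (fun i _ => Finset.card_image_of_injective _
        (add_right_injective _))]
      simp [Finset.card_range, mul_comm]
    rw [hcard, hdiv]
    have hsplit : (Finset.univ.filter fun i : Fin k => x i = y i).card +
        (Finset.univ.filter fun i : Fin k => ¬(x i = y i)).card = k := by
      rw [Finset.card_filter_add_card_filter_not]
      simp
    have : ((Finset.univ.filter fun i : Fin k => x i = y i).card : ℤ) +
        ((Finset.univ.filter fun i : Fin k => x i ≠ y i).card : ℤ) = k := by
      exact_mod_cast hsplit
    push_cast
    linear_combination (m:ℤ) * this
  · intro i hi j hj hij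
    rw [Function.onFun, Finset.disjoint_left]
    rintro v hv hv'
    simp only [Finset.mem_image, Finset.mem_range] at hv hv'
    obtain ⟨t, ht, rfl⟩ := hv
    obtain ⟨s, hs, h⟩ := hv'
    obtain ⟨-, hij', -⟩ := decode k m (x j) (x i) (j:ℕ) (i:ℕ) s t j.isLt i.isLt hs ht h
    exact hij (Fin.ext hij'.symm)
end

section
/- For every sufficiently large integer n the following holds. Let U be a finite set, let X ⊆ U with |X| ≤ n, let K = ⌈n/log₂ n⌉, and let b : U → Fin K be a random function that is ⌈6·log₂ n⌉-wise independent and uniform. Then with probability at least 1 − 1/n², every j ∈ Fin K satisfies |{ x ∈ X : b(x) = j }| ≤ 6·log₂ n. -/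
open MeasureTheory

/-- `(t/e)^t ≤ t!` as reals. -/
lemma pow_div_exp_le_factorial : ∀ t : ℕ, ((t : ℝ) / Real.exp 1) ^ t ≤ (t.factorial : ℝ) := by
  intro t
  induction t with
  | zero => simp
  | succ t ih =>
    have he : (0:ℝ) < Real.exp 1 := Real.exp_pos 1
    have het : (0:ℝ) < Real.exp 1 ^ t := pow_pos he t
    have htnn : (0:ℝ) ≤ (t:ℝ) := Nat.cast_nonneg t
    have key : ((t:ℝ) + 1) ^ t ≤ Real.exp 1 * (t:ℝ) ^ t := by
      rcases Nat.eq_zero_or_pos t with h | h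
      · subst h; simpa using (Real.one_le_exp (by norm_num : (0:ℝ) ≤ 1))
      · have ht : (0:ℝ) < t := by exact_mod_cast h
        have h1 : (1 : ℝ) + 1 / t ≤ Real.exp (1 / t) := by
          have := Real.add_one_le_exp (1 / (t:ℝ)); linarith
        have h2 : ((t:ℝ) + 1) ^ t = (t:ℝ) ^ t * (1 + 1 / t) ^ t := by
          rw [← mul_pow]; congr 1; field_simp
        have h3 : (1 + 1 / (t:ℝ)) ^ t ≤ Real.exp (1 / t) ^ t := by
          apply pow_le_pow_left₀ (by positivity) h1
        have h4 : Real.exp (1 / (t:ℝ)) ^ t = Real.exp 1 := by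
          rw [← Real.exp_nat_mul]; congr 1; field_simp
        calc ((t:ℝ) + 1) ^ t = (t:ℝ) ^ t * (1 + 1 / t) ^ t := h2
          _ ≤ (t:ℝ) ^ t * Real.exp 1 := by
              rw [← h4]; exact mul_le_mul_of_nonneg_left h3 (by positivity)
          _ = Real.exp 1 * (t:ℝ) ^ t := by ring
    have step : (((t:ℝ) + 1) / Real.exp 1) ^ (t + 1) ≤ ((t:ℝ) + 1) * ((t:ℝ) / Real.exp 1) ^ t := by
      rw [div_pow, div_pow, mul_div_assoc' ((t:ℝ)+1)]
      rw [div_le_div_iff₀ (pow_pos he (t+1)) het]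
      calc ((t:ℝ) + 1) ^ (t + 1) * Real.exp 1 ^ t
          = (((t:ℝ) + 1) ^ t * Real.exp 1 ^ t) * ((t:ℝ) + 1) := by ring
        _ ≤ ((Real.exp 1 * (t:ℝ) ^ t) * Real.exp 1 ^ t) * ((t:ℝ) + 1) := by
            apply mul_le_mul_of_nonneg_right (mul_le_mul_of_nonneg_right key het.le)
            positivity
        _ = ((t:ℝ) + 1) * (t:ℝ) ^ t * Real.exp 1 ^ (t + 1) := by ring
    calc ((((t+1):ℕ):ℝ) / Real.exp 1) ^ (t + 1)
        = (((t:ℝ) + 1) / Real.exp 1) ^ (t + 1) := by push_cast; ring_nf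
      _ ≤ ((t:ℝ) + 1) * ((t:ℝ) / Real.exp 1) ^ t := step
      _ ≤ ((t:ℝ) + 1) * (t.factorial : ℝ) := by
          apply mul_le_mul_of_nonneg_left ih (by positivity)
      _ = ((t+1).factorial : ℝ) := by rw [Nat.factorial_succ]; push_cast; ring

/-- For every sufficiently large `n`: let `U` be a finite set,
`X ⊆ U` with `|X| ≤ n`, `K = ⌈n / log₂ n⌉`, and let `b : U → Fin K` be a random
function that is `⌈6·log₂ n⌉`-wise independent and uniform. Then with probability
at least `1 - 1/n²`, every bucket `j ∈ Fin K` contains at most `6·log₂ n` elements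
of `X`. -/
theorem light_buckets :
    ∃ n₀ : ℕ, ∀ n : ℕ, n₀ ≤ n →
      ∀ (Ω : Type) (_ : MeasurableSpace Ω) (μ : Measure Ω), IsProbabilityMeasure μ →
      ∀ (U : Type) (_ : Fintype U) (_ : DecidableEq U) (X : Finset U), X.card ≤ n →
      ∀ b : Ω → U → Fin ⌈(n : ℝ) / Real.logb 2 n⌉₊,
      (∀ j : ℕ, j ≤ ⌈6 * Real.logb 2 n⌉₊ → ∀ u : Fin j → U, Function.Injective u →
        ∀ v : Fin j → Fin ⌈(n : ℝ) / Real.logb 2 n⌉₊,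
          μ {ω | ∀ i : Fin j, b ω (u i) = v i} =
            1 / (⌈(n : ℝ) / Real.logb 2 n⌉₊ : ENNReal) ^ j) →
      ENNReal.ofReal (1 - 1 / (n : ℝ) ^ 2) ≤
        μ {ω | ∀ j : Fin ⌈(n : ℝ) / Real.logb 2 n⌉₊,
            ((X.filter fun x => b ω x = j).card : ℝ) ≤ 6 * Real.logb 2 n} := by
  refine ⟨2 ^ 30, ?_⟩
  intro n hn Ω mΩ μ hμ U fU dU X hX
  set L : ℝ := Real.logb 2 n with hLdef
  set K : ℕ := ⌈(n : ℝ) / L⌉₊ with hKdef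
  set t : ℕ := ⌈6 * L⌉₊ with htdef
  intro b hb
  -- basic numeric facts
  have hn' : ((2:ℝ) ^ (30:ℕ)) ≤ (n : ℝ) := by exact_mod_cast hn
  have hN1 : (1:ℝ) ≤ (n : ℝ) := le_trans (by norm_num) hn'
  have hNpos : (0:ℝ) < (n : ℝ) := lt_of_lt_of_le one_pos hN1
  have hL30 : (30:ℝ) ≤ L := by
    have : Real.logb 2 ((2:ℝ) ^ (30:ℕ)) ≤ L := by
      rw [hLdef]
      exact Real.logb_le_logb_of_le (by norm_num) (by positivity) hn'
    rwa [Real.logb_pow, Real.logb_self_eq_one (by norm_num), mul_one] at this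
  have hLpos : (0:ℝ) < L := lt_of_lt_of_le (by norm_num) hL30
  have hL1 : (1:ℝ) ≤ L := le_trans (by norm_num) hL30
  have hKr : (n:ℝ) / L ≤ (K:ℝ) := Nat.le_ceil _
  have hKpos : 0 < K := Nat.ceil_pos.mpr (div_pos hNpos hLpos)
  have hKleN : (K:ℝ) ≤ (n:ℝ) := by
    have h1 : K ≤ n := by
      rw [hKdef]
      calc ⌈(n:ℝ)/L⌉₊ ≤ ⌈(n:ℝ)⌉₊ := Nat.ceil_le_ceil (div_le_self hNpos.le hL1)
        _ = n := Nat.ceil_natCast n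
    exact_mod_cast h1
  have hT : 6 * L ≤ (t:ℝ) := Nat.le_ceil _
  have hTpos : (0:ℝ) < (t:ℝ) := lt_of_lt_of_le (by linarith) hT
  have he : (0:ℝ) < Real.exp 1 := Real.exp_pos 1
  have he3 : Real.exp 1 ≤ 3 := le_of_lt (lt_trans Real.exp_one_lt_d9 (by norm_num))
  -- the core real inequality
  have core : (K:ℝ) * (X.card.choose t : ℝ) * (n:ℝ)^2 ≤ (K:ℝ)^t := by
    have hC : ((X.card.choose t : ℕ):ℝ) ≤ (n:ℝ)^t / (t.factorial : ℝ) := by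
      calc ((X.card.choose t : ℕ):ℝ) ≤ ((n.choose t : ℕ):ℝ) := by
            exact_mod_cast Nat.choose_le_choose t hX
        _ ≤ (n:ℝ)^t / (t.factorial : ℝ) := by
            have := Nat.choose_le_pow_div t n (α := ℝ)
            simpa using this
    have hfac : ((t:ℝ) / Real.exp 1) ^ t ≤ (t.factorial : ℝ) := pow_div_exp_le_factorial t
    have hfacpos : (0:ℝ) < ((t:ℝ) / Real.exp 1) ^ t := by positivity
    have hstep1 : (n:ℝ)^t / (t.factorial : ℝ) ≤ (n:ℝ)^t * (Real.exp 1 / (t:ℝ))^t := by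
      rw [div_le_iff₀ (by positivity : (0:ℝ) < (t.factorial : ℝ))]
      have : (Real.exp 1 / (t:ℝ))^t * ((t:ℝ) / Real.exp 1) ^ t = 1 := by
        rw [← mul_pow]; rw [div_mul_div_comm]
        rw [mul_comm (Real.exp 1) (t:ℝ)]
        rw [div_self (by positivity)]
        simp
      calc (n:ℝ)^t = (n:ℝ)^t * ((Real.exp 1 / (t:ℝ))^t * ((t:ℝ) / Real.exp 1) ^ t) := by
            rw [this]; ring
        _ ≤ (n:ℝ)^t * ((Real.exp 1 / (t:ℝ))^t * (t.factorial : ℝ)) := by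
            apply mul_le_mul_of_nonneg_left _ (by positivity)
            exact mul_le_mul_of_nonneg_left hfac (by positivity)
        _ = (n:ℝ)^t * (Real.exp 1 / (t:ℝ))^t * (t.factorial : ℝ) := by ring
    -- key: n^3 ≤ (t/(e*L))^t
    have hkey : (n:ℝ)^(3:ℕ) ≤ ((t:ℝ) / (Real.exp 1 * L))^t := by
      have h2 : (2:ℝ) ≤ (t:ℝ) / (Real.exp 1 * L) := by
        rw [le_div_iff₀ (by positivity)]
        calc 2 * (Real.exp 1 * L) ≤ 2 * (3 * L) := by
              apply mul_le_mul_of_nonneg_left _ (by norm_num)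
              exact mul_le_mul_of_nonneg_right he3 hLpos.le
          _ = 6 * L := by ring
          _ ≤ (t:ℝ) := hT
      have h2t : (2:ℝ)^t ≤ ((t:ℝ) / (Real.exp 1 * L))^t :=
        pow_le_pow_left₀ (by norm_num) h2 t
      have hn3 : (n:ℝ)^(3:ℕ) ≤ (2:ℝ)^t := by
        have e1 : ((n:ℝ))^(3:ℕ) = (2:ℝ) ^ (L * 3) := by
          rw [← Real.rpow_logb (by norm_num : (0:ℝ) < 2) (by norm_num) hNpos]
          rw [← Real.rpow_natCast ((2:ℝ) ^ L) 3, ← Real.rpow_mul (by norm_num)]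
          norm_num
        have e2 : (2:ℝ)^t = (2:ℝ) ^ ((t:ℝ)) := by rw [Real.rpow_natCast]
        rw [e1, e2]
        apply Real.rpow_le_rpow_of_exponent_le (by norm_num)
        linarith
      exact le_trans hn3 h2t
    have hfinal : (n:ℝ)^(3:ℕ) * ((n:ℝ) * Real.exp 1 / (t:ℝ))^t ≤ ((n:ℝ)/L)^t := by
      have hsplit : ((n:ℝ)/L)^t = ((n:ℝ) * Real.exp 1 / (t:ℝ))^t * ((t:ℝ) / (Real.exp 1 * L))^t := by
        rw [← mul_pow]; congr 1; field_simp
      rw [hsplit]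
      calc (n:ℝ)^(3:ℕ) * ((n:ℝ) * Real.exp 1 / (t:ℝ))^t
          ≤ ((t:ℝ) / (Real.exp 1 * L))^t * ((n:ℝ) * Real.exp 1 / (t:ℝ))^t := by
            apply mul_le_mul_of_nonneg_right hkey (by positivity)
        _ = ((n:ℝ) * Real.exp 1 / (t:ℝ))^t * ((t:ℝ) / (Real.exp 1 * L))^t := by ring
    calc (K:ℝ) * (X.card.choose t : ℝ) * (n:ℝ)^2
        ≤ (n:ℝ) * ((n:ℝ)^t * (Real.exp 1 / (t:ℝ))^t) * (n:ℝ)^2 := by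
          apply mul_le_mul_of_nonneg_right _ (by positivity)
          apply mul_le_mul hKleN (le_trans hC hstep1) (by positivity) hNpos.le
      _ = (n:ℝ)^(3:ℕ) * ((n:ℝ) * Real.exp 1 / (t:ℝ))^t := by
          rw [div_pow, div_pow, mul_pow]; ring
      _ ≤ ((n:ℝ)/L)^t := hfinal
      _ ≤ (K:ℝ)^t := pow_le_pow_left₀ (by positivity) hKr t
  -- events
  set G : Set Ω := {ω | ∀ j : Fin K,
      ((X.filter fun x => b ω x = j).card : ℝ) ≤ 6 * L} with hGdef
  set E : Fin K → Finset U → Set Ω := fun j S => {ω | ∀ x ∈ S, b ω x = j} with hEdef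
  set Bad : Set Ω := ⋃ j ∈ (Finset.univ : Finset (Fin K)), ⋃ S ∈ X.powersetCard t, E j S with hBaddef
  have hcover : (Set.univ : Set Ω) ⊆ G ∪ Bad := by
    intro ω _
    by_cases hg : ω ∈ G
    · exact Or.inl hg
    · right
      simp only [hGdef, Set.mem_setOf_eq, not_forall, not_le] at hg
      obtain ⟨j, hj⟩ := hg
      have hct : t ≤ (X.filter fun x => b ω x = j).card := by
        rw [htdef]; exact Nat.ceil_le.mpr (by exact_mod_cast hj.le)
      obtain ⟨S, hSsub, hScard⟩ := Finset.exists_subset_card_eq hct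
      simp only [hBaddef, Set.mem_iUnion, Finset.mem_univ, exists_true_left]
      refine ⟨j, S, ?_, ?_⟩
      · exact Finset.mem_powersetCard.mpr ⟨hSsub.trans (Finset.filter_subset _ _), hScard⟩
      · intro x hx
        exact (Finset.mem_filter.mp (hSsub hx)).2
  have hone : (1 : ENNReal) ≤ μ G + μ Bad := by
    calc (1:ENNReal) = μ Set.univ := (measure_univ).symm
      _ ≤ μ (G ∪ Bad) := measure_mono hcover
      _ ≤ μ G + μ Bad := measure_union_le _ _
  -- measure of each elementary event
  have hE : ∀ j : Fin K, ∀ S ∈ X.powersetCard t, μ (E j S) = 1 / (K : ENNReal) ^ t := by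
    intro j S hS
    obtain ⟨hSX, hScard⟩ := Finset.mem_powersetCard.mp hS
    let e : {x // x ∈ S} ≃ Fin t := Fintype.equivFinOfCardEq (by simp [hScard])
    have hu : Function.Injective (fun i : Fin t => ((e.symm i : {x // x ∈ S}) : U)) := by
      intro i i' hii
      exact e.symm.injective (Subtype.coe_injective hii)
    have hset : {ω | ∀ i : Fin t, b ω ((e.symm i : {x // x ∈ S}) : U) = j} = E j S := by
      ext ω
      simp only [Set.mem_setOf_eq, hEdef]
      constructor
      · intro h x hx
        have := h (e ⟨x, hx⟩)
        simpa using this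
      · intro h i
        exact h _ (e.symm i).2
    have := hb t le_rfl _ hu (fun _ => j)
    rw [hset] at this
    exact this
  -- union bound
  have hBad : μ Bad ≤ (K : ENNReal) * (X.card.choose t : ENNReal) * (1 / (K : ENNReal) ^ t) := by
    calc μ Bad ≤ ∑ j : Fin K, μ (⋃ S ∈ X.powersetCard t, E j S) :=
          measure_biUnion_finset_le _ _
      _ ≤ ∑ j : Fin K, ∑ S ∈ X.powersetCard t, μ (E j S) :=
          Finset.sum_le_sum fun j _ => measure_biUnion_finset_le _ _
      _ = ∑ j : Fin K, ∑ S ∈ X.powersetCard t, (1 / (K : ENNReal) ^ t) := by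
          refine Finset.sum_congr rfl fun j _ => Finset.sum_congr rfl fun S hS => hE j S hS
      _ = (K : ENNReal) * (X.card.choose t : ENNReal) * (1 / (K : ENNReal) ^ t) := by
          simp [Finset.sum_const, Finset.card_powersetCard, mul_assoc]
  -- numeric bound in ENNReal
  have hnum : (K : ENNReal) * (X.card.choose t : ENNReal) * (1 / (K : ENNReal) ^ t)
      ≤ ENNReal.ofReal (1 / (n:ℝ)^2) := by
    rw [mul_one_div]
    apply ENNReal.div_le_of_le_mul
    have hcast1 : ((K : ENNReal) * (X.card.choose t : ENNReal)) =
        ENNReal.ofReal ((K:ℝ) * (X.card.choose t : ℝ)) := by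
      rw [ENNReal.ofReal_mul (by positivity)]
      simp [ENNReal.ofReal_natCast]
    have hcast2 : ((K : ENNReal) ^ t) = ENNReal.ofReal ((K:ℝ)^t) := by
      rw [ENNReal.ofReal_pow (by positivity)]
      simp [ENNReal.ofReal_natCast]
    rw [hcast1, hcast2, ← ENNReal.ofReal_mul (by positivity)]
    apply ENNReal.ofReal_le_ofReal
    rw [div_mul_eq_mul_div, one_mul, le_div_iff₀ (by positivity)]
    linarith [core]
  -- conclude
  have hBad2 : μ Bad ≤ ENNReal.ofReal (1 / (n:ℝ)^2) := le_trans hBad hnum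
  have hfin : ENNReal.ofReal (1 - 1/(n:ℝ)^2) ≤ μ G := by
    have h1 : ENNReal.ofReal (1 - 1/(n:ℝ)^2) + μ Bad ≤ 1 := by
      calc ENNReal.ofReal (1 - 1/(n:ℝ)^2) + μ Bad
          ≤ ENNReal.ofReal (1 - 1/(n:ℝ)^2) + ENNReal.ofReal (1/(n:ℝ)^2) := by
            exact add_le_add_right hBad2 _
        _ = ENNReal.ofReal ((1 - 1/(n:ℝ)^2) + 1/(n:ℝ)^2) := by
            rw [ENNReal.ofReal_add]
            · have : (1:ℝ)/(n:ℝ)^2 ≤ 1 := by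
                rw [div_le_one (by positivity)]; nlinarith
              linarith
            · positivity
        _ = 1 := by norm_num
    by_contra hcon
    push_neg at hcon
    have : μ G + μ Bad < ENNReal.ofReal (1 - 1/(n:ℝ)^2) + μ Bad := by
      apply ENNReal.add_lt_add_right _ hcon
      exact lt_of_le_of_lt hBad2 (by simp [ENNReal.ofReal_lt_top]) |>.ne
    exact absurd (lt_of_le_of_lt hone (this.trans_le h1)) (lt_irrefl 1)
  exact hfin
end

section
/- For every sufficiently large integer n the following holds. Let k = ⌈n/log₂ n⌉, let U be a finite set, and let X_1, …, X_k ⊆ U be pairwise disjoint sets with |X_i| ≤ 6·log₂ n for every i. Let R = ⌈(log₂ n)^{10}⌉ and let g_1, …, g_k : U → Fin R be random functions that are mutually independent of one another and such that each g_i is pairwise (2-wise) independent and uniform. Say that X_i contains a fingerprint collision if there exist distinct x, x' ∈ X_i with g_i(x) = g_i(x'). Then with probability at least 1 − 1/n², strictly fewer than n/(log₂ n)^6 of the sets X_1, …, X_k contain a fingerprint collision. -/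
open Real

set_option maxRecDepth 8000

lemma fp_arith (n : ℕ) (hn : 2^8388608 ≤ n) :
    (Nat.choose ⌈(n:ℝ)/Real.logb 2 n⌉₊ ⌈(n:ℝ)/(Real.logb 2 n)^6⌉₊ : ℝ) *
      (36*(Real.logb 2 n)^2/((⌈(Real.logb 2 n)^10⌉₊ : ℕ):ℝ)) ^ ⌈(n:ℝ)/(Real.logb 2 n)^6⌉₊
      ≤ 1/(n:ℝ)^2 := by
  set L : ℝ := Real.logb 2 n with hLdef
  have hnpos : (0:ℝ) < n := by
    have : (0:ℕ) < n := lt_of_lt_of_le (by positivity) hn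
    exact_mod_cast this
  have hn2 : ((2:ℝ))^((8388608:ℕ):ℝ) ≤ (n:ℝ) := by
    rw [Real.rpow_natCast]
    exact_mod_cast hn
  have hL : (8000000:ℝ) ≤ L := by
    refine (Real.le_logb_iff_rpow_le (by norm_num : (1:ℝ) < 2) hnpos).mpr ?_
    refine le_trans ?_ hn2
    have : ((8388608:ℕ):ℝ) = (8388608:ℝ) := by norm_num
    rw [this]
    exact Real.rpow_le_rpow_of_exponent_le (by norm_num) (by norm_num)
  clear hn hn2
  have hLpos : (0:ℝ) < L := by linarith
  have hn_eq : (2:ℝ) ^ L = (n:ℝ) := Real.rpow_logb (by norm_num) (by norm_num) hnpos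
  -- F1 : 2 * L^7 ≤ n
  have h06 : (0.6:ℝ) ≤ Real.log 2 := by
    have := Real.log_two_gt_d9; linarith
  have key : (80640:ℝ) * L^7 ≤ (Real.log 2)^8 * L^8 := by
    have he : (0.6:ℝ)^8 = 0.01679616 := by norm_num
    have h1 : (80640:ℝ) ≤ 0.6^8 * L := by rw [he]; linarith
    have h2 : (0.6:ℝ)^8 * L ≤ (Real.log 2)^8 * L := by
      have := pow_le_pow_left₀ (by norm_num : (0:ℝ) ≤ 0.6) h06 8
      exact mul_le_mul_of_nonneg_right this hLpos.le
    calc (80640:ℝ) * L^7 ≤ (0.6^8 * L) * L^7 :=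
          mul_le_mul_of_nonneg_right h1 (by positivity)
      _ ≤ ((Real.log 2)^8 * L) * L^7 := mul_le_mul_of_nonneg_right h2 (by positivity)
      _ = (Real.log 2)^8 * L^8 := by ring
  have F1 : 2 * L^7 ≤ (n:ℝ) := by
    have h8 : (Real.log 2 * L)^8 / ((Nat.factorial 8 : ℕ):ℝ) ≤ Real.exp (Real.log 2 * L) :=
      Real.pow_div_factorial_le_exp (x := Real.log 2 * L) (by positivity) 8
    have hfac : ((Nat.factorial 8 : ℕ):ℝ) = 40320 := by norm_num [Nat.factorial]
    have hexp : Real.exp (Real.log 2 * L) = (2:ℝ)^L := (Real.rpow_def_of_pos (by norm_num) L).symm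
    rw [hfac, mul_pow] at h8
    have h9 : (80640:ℝ) * L^7 / 40320 ≤ (Real.log 2)^8 * L^8 / 40320 := by
      exact div_le_div_of_nonneg_right key (by norm_num)
    have h10 : (80640:ℝ) * L^7 / 40320 = 2 * L^7 := by ring
    rw [← hn_eq, ← hexp]
    linarith

  set K : ℕ := ⌈(n:ℝ)/L⌉₊ with hKdef
  set M : ℕ := ⌈(n:ℝ)/L^6⌉₊ with hMdef
  set R : ℕ := ⌈L^10⌉₊ with hRdef
  have hRge : L^10 ≤ (R:ℝ) := Nat.le_ceil _
  have hRpos : (0:ℝ) < R := lt_of_lt_of_le (by positivity) hRge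
  have hMge : (n:ℝ)/L^6 ≤ (M:ℝ) := Nat.le_ceil _
  have hM2L : 2*L ≤ (M:ℝ) := by
    refine le_trans ?_ hMge
    rw [le_div_iff₀ (by positivity)]
    nlinarith
  have hMpos : (0:ℝ) < M := by linarith
  have hKle : (K:ℝ) ≤ 2*(n:ℝ)/L := by
    have h1 : ((K:ℕ):ℝ) < (n:ℝ)/L + 1 := Nat.ceil_lt_add_one (by positivity)
    have h2 : (1:ℝ) ≤ (n:ℝ)/L := by
      rw [le_div_iff₀ hLpos]
      have h7 : L ≤ L^7 := le_self_pow₀ (by linarith) (by norm_num)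
      linarith
    have h3 : 2*(n:ℝ)/L = (n:ℝ)/L + (n:ℝ)/L := by ring
    linarith
  have hfacpos : (0:ℝ) < (Nat.factorial M : ℝ) := by
    exact_mod_cast Nat.factorial_pos M
  have hchoose : (Nat.choose K M : ℝ) ≤ (K:ℝ)^M / (Nat.factorial M : ℝ) := by
    rw [le_div_iff₀ hfacpos]
    have h1 := Nat.descFactorial_le_pow K M
    rw [Nat.descFactorial_eq_factorial_mul_choose] at h1
    calc (Nat.choose K M : ℝ) * (Nat.factorial M:ℝ)
        = ((Nat.factorial M * Nat.choose K M : ℕ):ℝ) := by push_cast; ring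
      _ ≤ ((K^M : ℕ):ℝ) := by exact_mod_cast h1
      _ = (K:ℝ)^M := by push_cast; ring
  set c : ℝ := 36*L^2/(R:ℝ) with hcdef
  have hc0 : (0:ℝ) ≤ c := by positivity
  have hKc : (K:ℝ)*c ≤ 72*(M:ℝ)/L^3 := by
    have h1 : c ≤ 36*L^2/L^10 := by
      rw [hcdef]
      gcongr
    have h2 : (K:ℝ)*c ≤ (2*(n:ℝ)/L)*(36*L^2/L^10) :=
      mul_le_mul hKle h1 hc0 (by positivity)
    have h3 : (2*(n:ℝ)/L)*(36*L^2/L^10) = 72*((n:ℝ)/L^6)/L^3 := by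
      field_simp
      ring
    have h4 : 72*((n:ℝ)/L^6)/L^3 ≤ 72*(M:ℝ)/L^3 := by gcongr
    linarith
  have hMM : (M:ℝ)^M / (Nat.factorial M:ℝ) ≤ 3^M := by
    have h1 : (M:ℝ)^M / (Nat.factorial M:ℝ) ≤ Real.exp (M:ℝ) :=
      Real.pow_div_factorial_le_exp (x := (M:ℝ)) (by positivity) M
    have h2 : Real.exp ((M:ℕ):ℝ) = Real.exp 1 ^ (M:ℕ) := by
      rw [← Real.exp_nat_mul, mul_one]
    have h3 : Real.exp 1 ^ M ≤ 3^M :=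
      pow_le_pow_left₀ (Real.exp_pos 1).le
        (by have := Real.exp_one_lt_d9; linarith) M
    calc (M:ℝ)^M / (Nat.factorial M:ℝ) ≤ Real.exp (M:ℝ) := h1
      _ = Real.exp 1 ^ M := h2
      _ ≤ 3^M := h3
  have main : (Nat.choose K M : ℝ) * c^M ≤ (216/L^3)^M := by
    calc (Nat.choose K M : ℝ) * c^M
        ≤ ((K:ℝ)^M / (Nat.factorial M:ℝ)) * c^M :=
          mul_le_mul_of_nonneg_right hchoose (by positivity)
      _ = ((K:ℝ)*c)^M / (Nat.factorial M:ℝ) := by rw [mul_pow]; ring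
      _ ≤ (72*(M:ℝ)/L^3)^M / (Nat.factorial M:ℝ) :=
          div_le_div_of_nonneg_right (pow_le_pow_left₀ (by positivity) hKc M) hfacpos.le
      _ = (72/L^3)^M * ((M:ℝ)^M / (Nat.factorial M:ℝ)) := by
          rw [show 72*(M:ℝ)/L^3 = (72/L^3)*(M:ℝ) by ring, mul_pow]
          ring
      _ ≤ (72/L^3)^M * 3^M := by
          exact mul_le_mul_of_nonneg_left hMM (by positivity)
      _ = (216/L^3)^M := by
          rw [← mul_pow]
          congr 1
          ring
  have hhalf : (216:ℝ)/L^3 ≤ 1/2 := by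
    rw [div_le_div_iff₀ (by positivity) (by norm_num)]
    nlinarith
  have hfinal1 : ((216:ℝ)/L^3)^M ≤ (1/2)^M := pow_le_pow_left₀ (by positivity) hhalf M
  have hn2le : (n:ℝ)^2 ≤ (2:ℝ)^M := by
    have e1 : ((n:ℝ))^2 = (2:ℝ)^((L*2:ℝ)) := by
      rw [← hn_eq, Real.rpow_mul (by norm_num : (0:ℝ) ≤ 2)]
      rw [show ((2:ℝ)^L)^(2:ℝ) = ((2:ℝ)^L)^((2:ℕ):ℝ) by norm_num]
      rw [Real.rpow_natCast]
    have e2 : (2:ℝ)^((L*2:ℝ)) ≤ (2:ℝ)^((M:ℝ)) :=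
      Real.rpow_le_rpow_of_exponent_le (by norm_num) (by linarith)
    rw [e1, ← Real.rpow_natCast 2 M]
    exact e2
  have hfinal2 : ((1:ℝ)/2)^M ≤ 1/(n:ℝ)^2 := by
    rw [div_pow, one_pow]
    exact one_div_le_one_div_of_le (by positivity) hn2le
  exact main.trans (hfinal1.trans hfinal2)


open MeasureTheory ProbabilityTheory
open scoped Classical ENNReal

/-- For every sufficiently large `n`: let `k = ⌈n / log₂ n⌉`, let
`X_1, …, X_k ⊆ U` be pairwise disjoint with `|X_i| ≤ 6·log₂ n`, let
`R = ⌈(log₂ n)^10⌉`, and let `g_1, …, g_k : U → Fin R` be random functions that are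
mutually independent, each pairwise independent and uniform. Then with probability at
least `1 - 1/n²`, strictly fewer than `n/(log₂ n)^6` of the sets `X_i` contain a
fingerprint collision (two distinct elements with the same `g_i`-value). -/
theorem few_fingerprint_collisions :
    ∃ n₀ : ℕ, ∀ n : ℕ, n₀ ≤ n →
      ∀ (Ω : Type) (_ : MeasurableSpace Ω) (μ : Measure Ω), IsProbabilityMeasure μ →
      ∀ (U : Type) (_ : DecidableEq U)
        (X : Fin ⌈(n : ℝ) / Real.logb 2 n⌉₊ → Finset U),
      (Pairwise fun i i' => Disjoint (X i) (X i')) →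
      (∀ i, ((X i).card : ℝ) ≤ 6 * Real.logb 2 n) →
      ∀ g : Fin ⌈(n : ℝ) / Real.logb 2 n⌉₊ → Ω → U → Fin ⌈(Real.logb 2 n) ^ 10⌉₊,
      (∀ i, ∀ u : U, Measurable fun ω => g i ω u) →
      -- the functions g_1, …, g_k are mutually independent of one another
      iIndepFun (fun i => g i) μ →
      -- each g_i is uniform ...
      (∀ i, ∀ u : U, ∀ v : Fin ⌈(Real.logb 2 n) ^ 10⌉₊,
        μ {ω | g i ω u = v} = 1 / (⌈(Real.logb 2 n) ^ 10⌉₊ : ENNReal)) →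
      -- ... and pairwise (2-wise) independent
      (∀ i, ∀ u u' : U, u ≠ u' → ∀ v v' : Fin ⌈(Real.logb 2 n) ^ 10⌉₊,
        μ {ω | g i ω u = v ∧ g i ω u' = v'} =
          1 / (⌈(Real.logb 2 n) ^ 10⌉₊ : ENNReal) ^ 2) →
      ENNReal.ofReal (1 - 1 / (n : ℝ) ^ 2) ≤
        μ {ω | ((Finset.univ.filter fun i =>
            ∃ a ∈ X i, ∃ a' ∈ X i, a ≠ a' ∧ g i ω a = g i ω a').card : ℝ)
          < (n : ℝ) / (Real.logb 2 n) ^ 6} := by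
  refine ⟨2^8388608, ?_⟩
  intro n hn Ω mΩ μ hμ U _ X hdisj hcard g hmeas hindep hunif hpair
  -- basic facts
  have hn4 : (4:ℕ) ≤ n := by
    calc (4:ℕ) = 2^2 := rfl
      _ ≤ 2^8388608 := Nat.pow_le_pow_right (by norm_num) (by norm_num)
      _ ≤ n := hn
  have hn' : (Nat.choose ⌈(n:ℝ)/Real.logb 2 n⌉₊ ⌈(n:ℝ)/(Real.logb 2 n)^6⌉₊ : ℝ) *
      (36*(Real.logb 2 n)^2/((⌈(Real.logb 2 n)^10⌉₊ : ℕ):ℝ)) ^ ⌈(n:ℝ)/(Real.logb 2 n)^6⌉₊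
      ≤ 1/(n:ℝ)^2 := fp_arith n hn
  clear hn
  have hnpos : (0:ℝ) < n := by
    have : (0:ℕ) < n := by omega
    exact_mod_cast this
  have hL1 : (1:ℝ) ≤ Real.logb 2 n := by
    rw [Real.le_logb_iff_rpow_le (by norm_num) hnpos, Real.rpow_one]
    have : (4:ℝ) ≤ n := by exact_mod_cast hn4
    linarith
  have hLpos : (0:ℝ) < Real.logb 2 n := by linarith
  have hRR1 : 1 ≤ ⌈(Real.logb 2 n) ^ 10⌉₊ := Nat.one_le_ceil_iff.mpr (by positivity)
  have hRne0 : ((⌈(Real.logb 2 n) ^ 10⌉₊ : ℕ):ℝ≥0∞) ≠ 0 :=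
    Nat.cast_ne_zero.mpr (by omega)
  have hRnetop : ((⌈(Real.logb 2 n) ^ 10⌉₊ : ℕ):ℝ≥0∞) ≠ ⊤ := ENNReal.natCast_ne_top _
  -- bad events
  set Bad : Fin ⌈(n : ℝ) / Real.logb 2 n⌉₊ → Set Ω :=
    fun i => {ω | ∃ a ∈ X i, ∃ a' ∈ X i, a ≠ a' ∧ g i ω a = g i ω a'} with hBaddef
  set p : ℝ≥0∞ :=
    ENNReal.ofReal (36*(Real.logb 2 n)^2) / ((⌈(Real.logb 2 n) ^ 10⌉₊ : ℕ):ℝ≥0∞) with hpdef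
  -- single-pair collision bound
  have hone : ∀ (i) (a a' : U), a ≠ a' →
      μ {ω | g i ω a = g i ω a'} ≤ 1 / ((⌈(Real.logb 2 n) ^ 10⌉₊ : ℕ):ℝ≥0∞) := by
    intro i a a' hne
    have hsub : {ω | g i ω a = g i ω a'} ⊆
        ⋃ v : Fin ⌈(Real.logb 2 n) ^ 10⌉₊, {ω | g i ω a = v ∧ g i ω a' = v} := by
      intro ω hω
      exact Set.mem_iUnion.2 ⟨g i ω a, rfl, hω.symm⟩
    calc μ {ω | g i ω a = g i ω a'}
        ≤ ∑' v : Fin ⌈(Real.logb 2 n) ^ 10⌉₊, μ {ω | g i ω a = v ∧ g i ω a' = v} :=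
          le_trans (measure_mono hsub) (measure_iUnion_le _)
      _ = ∑ v : Fin ⌈(Real.logb 2 n) ^ 10⌉₊, μ {ω | g i ω a = v ∧ g i ω a' = v} :=
          tsum_fintype _
      _ = ∑ _v : Fin ⌈(Real.logb 2 n) ^ 10⌉₊, 1 / ((⌈(Real.logb 2 n) ^ 10⌉₊ : ℕ):ℝ≥0∞)^2 := by
          refine Finset.sum_congr rfl fun v _ => ?_
          exact hpair i a a' hne v v
      _ = ((⌈(Real.logb 2 n) ^ 10⌉₊ : ℕ):ℝ≥0∞) * (1 / ((⌈(Real.logb 2 n) ^ 10⌉₊ : ℕ):ℝ≥0∞)^2) := by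
          rw [Finset.sum_const, Finset.card_univ, Fintype.card_fin, nsmul_eq_mul]
      _ = 1 / ((⌈(Real.logb 2 n) ^ 10⌉₊ : ℕ):ℝ≥0∞) := by
          rw [one_div, one_div, sq, ENNReal.mul_inv (Or.inl hRne0) (Or.inl hRnetop),
            ← mul_assoc, ENNReal.mul_inv_cancel hRne0 hRnetop, one_mul]
  -- per-index bad-event bound
  have hbad : ∀ i, μ (Bad i) ≤ p := by
    intro i
    have hsub : Bad i ⊆ ⋃ q ∈ ((X i) ×ˢ (X i) : Finset (U × U)),
        {ω | q.1 ≠ q.2 ∧ g i ω q.1 = g i ω q.2} := by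
      rintro ω ⟨a, ha, a', ha', hne, hgg⟩
      exact Set.mem_iUnion₂.2 ⟨(a,a'), Finset.mem_product.2 ⟨ha, ha'⟩, ⟨hne, hgg⟩⟩
    have hterm : ∀ q ∈ ((X i) ×ˢ (X i) : Finset (U × U)),
        μ {ω | q.1 ≠ q.2 ∧ g i ω q.1 = g i ω q.2} ≤ 1 / ((⌈(Real.logb 2 n) ^ 10⌉₊ : ℕ):ℝ≥0∞) := by
      intro q _
      by_cases h : q.1 = q.2
      · have : {ω | q.1 ≠ q.2 ∧ g i ω q.1 = g i ω q.2} = ∅ := by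
          ext ω; simp [h]
        simp [this]
      · refine le_trans (measure_mono ?_) (hone i q.1 q.2 h)
        intro ω hω; exact hω.2
    calc μ (Bad i)
        ≤ ∑ q ∈ ((X i) ×ˢ (X i) : Finset (U × U)),
            μ {ω | q.1 ≠ q.2 ∧ g i ω q.1 = g i ω q.2} :=
          le_trans (measure_mono hsub) (measure_biUnion_finset_le _ _)
      _ ≤ ∑ _q ∈ ((X i) ×ˢ (X i) : Finset (U × U)),
            1 / ((⌈(Real.logb 2 n) ^ 10⌉₊ : ℕ):ℝ≥0∞) :=
          Finset.sum_le_sum hterm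
      _ = (((X i).card * (X i).card : ℕ) : ℝ≥0∞)
            * (1 / ((⌈(Real.logb 2 n) ^ 10⌉₊ : ℕ):ℝ≥0∞)) := by
          rw [Finset.sum_const, Finset.card_product, nsmul_eq_mul]
      _ ≤ ENNReal.ofReal (36*(Real.logb 2 n)^2)
            * (1 / ((⌈(Real.logb 2 n) ^ 10⌉₊ : ℕ):ℝ≥0∞)) := by
          refine mul_le_mul_left ?_ _
          have h1 : (((X i).card * (X i).card : ℕ) : ℝ≥0∞)
              = ENNReal.ofReal (((X i).card : ℝ) * ((X i).card : ℝ)) := by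
            rw [ENNReal.ofReal_mul (by positivity)]
            push_cast [ENNReal.ofReal_natCast]
            ring
          rw [h1]
          refine ENNReal.ofReal_le_ofReal ?_
          have h2 := hcard i
          have h3 := mul_self_le_mul_self (α := ℝ) (Nat.cast_nonneg _) h2
          nlinarith [h3]
      _ = p := by simp [hpdef, div_eq_mul_inv]
  -- independence product
  have hprod : ∀ S : Finset (Fin ⌈(n : ℝ) / Real.logb 2 n⌉₊),
      μ (⋂ i ∈ S, Bad i) = ∏ i ∈ S, μ (Bad i) := by
    intro S
    set sets : ∀ _i : Fin ⌈(n : ℝ) / Real.logb 2 n⌉₊, Set (U → Fin ⌈(Real.logb 2 n) ^ 10⌉₊) :=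
      fun i => {f | ∃ a ∈ X i, ∃ a' ∈ X i, a ≠ a' ∧ f a = f a'} with hsetsdef
    have hsets : ∀ i, MeasurableSet (sets i) := by
      intro i
      have heq : sets i = ⋃ a ∈ (X i : Set U), ⋃ a' ∈ (X i : Set U), ⋃ (_ : a ≠ a'),
          {f : U → Fin ⌈(Real.logb 2 n) ^ 10⌉₊ | f a = f a'} := by
        ext f
        simp only [hsetsdef, Set.mem_setOf_eq, Set.mem_iUnion, Finset.mem_coe]
        tauto
      rw [heq]
      refine Set.Finite.measurableSet_biUnion (X i).finite_toSet fun a _ => ?_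
      refine Set.Finite.measurableSet_biUnion (X i).finite_toSet fun a' _ => ?_
      refine MeasurableSet.iUnion fun _ => ?_
      have h2 : {f : U → Fin ⌈(Real.logb 2 n) ^ 10⌉₊ | f a = f a'}
          = ⋃ v, ((fun f : U → Fin ⌈(Real.logb 2 n) ^ 10⌉₊ => f a) ⁻¹' {v})
              ∩ ((fun f : U → Fin ⌈(Real.logb 2 n) ^ 10⌉₊ => f a') ⁻¹' {v}) := by
        ext f
        simp only [Set.mem_setOf_eq, Set.mem_iUnion, Set.mem_inter_iff, Set.mem_preimage,
          Set.mem_singleton_iff]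
        constructor
        · intro h; exact ⟨f a, rfl, h.symm⟩
        · rintro ⟨v, h1, h2⟩; rw [h1, h2]
      rw [h2]
      exact MeasurableSet.iUnion fun v =>
        ((measurable_pi_apply a) (measurableSet_singleton v)).inter
          ((measurable_pi_apply a') (measurableSet_singleton v))
    have hpre : ∀ i, Bad i = g i ⁻¹' sets i := fun i => rfl
    calc μ (⋂ i ∈ S, Bad i) = μ (⋂ i ∈ S, g i ⁻¹' sets i) := by simp_rw [hpre]
      _ = ∏ i ∈ S, μ (g i ⁻¹' sets i) :=
          hindep.measure_inter_preimage_eq_mul S (fun i _ => hsets i)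
      _ = ∏ i ∈ S, μ (Bad i) := by simp_rw [hpre]
  -- the target event
  set T : Set Ω := {ω | ((Finset.univ.filter fun i =>
      ∃ a ∈ X i, ∃ a' ∈ X i, a ≠ a' ∧ g i ω a = g i ω a').card : ℝ)
      < (n : ℝ) / (Real.logb 2 n) ^ 6} with hTdef
  have hTc : Tᶜ ⊆ ⋃ S ∈ Finset.powersetCard ⌈(n:ℝ)/(Real.logb 2 n)^6⌉₊
      (Finset.univ : Finset (Fin ⌈(n : ℝ) / Real.logb 2 n⌉₊)), ⋂ i ∈ S, Bad i := by
    intro ω hω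
    simp only [hTdef, Set.mem_compl_iff, Set.mem_setOf_eq, not_lt] at hω
    have h2 : ⌈(n:ℝ)/(Real.logb 2 n)^6⌉₊ ≤ (Finset.univ.filter fun i =>
        ∃ a ∈ X i, ∃ a' ∈ X i, a ≠ a' ∧ g i ω a = g i ω a').card := Nat.ceil_le.mpr hω
    obtain ⟨S, hSsub, hScard⟩ := Finset.exists_subset_card_eq h2
    refine Set.mem_iUnion₂.2 ⟨S, Finset.mem_powersetCard_univ.mpr hScard, ?_⟩
    refine Set.mem_iInter₂.2 fun i hi => ?_
    exact (Finset.mem_filter.mp (hSsub hi)).2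
  -- union bound over subsets
  have hμTc : μ Tᶜ ≤ ENNReal.ofReal (1/(n:ℝ)^2) := by
    calc μ Tᶜ
        ≤ ∑ S ∈ Finset.powersetCard ⌈(n:ℝ)/(Real.logb 2 n)^6⌉₊
            (Finset.univ : Finset (Fin ⌈(n : ℝ) / Real.logb 2 n⌉₊)), μ (⋂ i ∈ S, Bad i) :=
          le_trans (measure_mono hTc) (measure_biUnion_finset_le _ _)
      _ = ∑ S ∈ Finset.powersetCard ⌈(n:ℝ)/(Real.logb 2 n)^6⌉₊
            (Finset.univ : Finset (Fin ⌈(n : ℝ) / Real.logb 2 n⌉₊)), ∏ i ∈ S, μ (Bad i) :=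
          Finset.sum_congr rfl fun S _ => hprod S
      _ ≤ ∑ _S ∈ Finset.powersetCard ⌈(n:ℝ)/(Real.logb 2 n)^6⌉₊
            (Finset.univ : Finset (Fin ⌈(n : ℝ) / Real.logb 2 n⌉₊)),
            p ^ ⌈(n:ℝ)/(Real.logb 2 n)^6⌉₊ := by
          refine Finset.sum_le_sum fun S hS => ?_
          have hcardS : S.card = ⌈(n:ℝ)/(Real.logb 2 n)^6⌉₊ :=
            Finset.mem_powersetCard_univ.mp hS
          calc ∏ i ∈ S, μ (Bad i) ≤ ∏ _i ∈ S, p := Finset.prod_le_prod' fun i _ => hbad i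
            _ = p ^ ⌈(n:ℝ)/(Real.logb 2 n)^6⌉₊ := by rw [Finset.prod_const, hcardS]
      _ = (Nat.choose ⌈(n : ℝ) / Real.logb 2 n⌉₊ ⌈(n:ℝ)/(Real.logb 2 n)^6⌉₊)
            • p ^ ⌈(n:ℝ)/(Real.logb 2 n)^6⌉₊ := by
          rw [Finset.sum_const, Finset.card_powersetCard, Finset.card_univ, Fintype.card_fin]
      _ ≤ ENNReal.ofReal (1/(n:ℝ)^2) := by
          rw [nsmul_eq_mul]
          have hRpos' : (0:ℝ) < ((⌈(Real.logb 2 n) ^ 10⌉₊ : ℕ):ℝ) := by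
            have : (0:ℕ) < ⌈(Real.logb 2 n) ^ 10⌉₊ := by omega
            exact_mod_cast this
          have hp' : p = ENNReal.ofReal
              (36*(Real.logb 2 n)^2/((⌈(Real.logb 2 n) ^ 10⌉₊ : ℕ):ℝ)) := by
            rw [hpdef, ENNReal.ofReal_div_of_pos hRpos', ENNReal.ofReal_natCast]
          rw [hp', ← ENNReal.ofReal_pow (by positivity),
            ← ENNReal.ofReal_natCast (Nat.choose _ _),
            ← ENNReal.ofReal_mul (by positivity)]
          exact ENNReal.ofReal_le_ofReal hn'
  -- conclude
  have hT1 : (1:ℝ≥0∞) ≤ μ T + μ Tᶜ := by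
    calc (1:ℝ≥0∞) = μ (T ∪ Tᶜ) := by rw [Set.union_compl_self, measure_univ]
      _ ≤ μ T + μ Tᶜ := measure_union_le _ _
  calc ENNReal.ofReal (1 - 1/(n:ℝ)^2) = 1 - ENNReal.ofReal (1/(n:ℝ)^2) := by
        rw [ENNReal.ofReal_sub _ (by positivity), ENNReal.ofReal_one]
    _ ≤ 1 - μ Tᶜ := tsub_le_tsub_left hμTc 1
    _ ≤ μ T := tsub_le_iff_right.mpr hT1
end

section
/- For every real constant c > 0 there exists n₀ such that for all integers n ≥ n₀ and all integers N with 0 ≤ N ≤ n^c, setting s = ⌊6n/(log₂ n)^5⌋, it holds that Σ_{m=0}^{s} (N choose m)·(2n+1)^m ≤ 2^n. -/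
open Real Filter Asymptotics

/-- For every real `c > 0` there is `n₀` such that for all `n ≥ n₀`
and all integers `0 ≤ N ≤ n^c`, with `s = ⌊6n/(log₂ n)^5⌋`, we have
`Σ_{m=0}^{s} (N choose m)·(2n+1)^m ≤ 2^n`. -/
theorem sparse_poly_count_le (c : ℝ) (hc : 0 < c) :
    ∃ n₀ : ℕ, ∀ n : ℕ, n₀ ≤ n → ∀ N : ℕ, (N : ℝ) ≤ (n : ℝ) ^ c →
      ∑ m ∈ Finset.range (⌊6 * (n : ℝ) / (Real.logb 2 n) ^ 5⌋₊ + 1),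
        N.choose m * (2 * n + 1) ^ m ≤ 2 ^ n := by
  have h1b : (1:ℝ) < 2 := one_lt_two
  have hlogo : (fun x : ℝ => Real.log x ^ 5) =o[atTop] (id : ℝ → ℝ) :=
    Real.isLittleO_pow_log_id_atTop
  have h2 : ∀ᶠ x : ℝ in atTop, (Real.logb 2 x) ^ 5 ≤ x := by
    have hε : (0:ℝ) < (Real.log 2) ^ 5 := pow_pos (Real.log_pos one_lt_two) 5
    filter_upwards [hlogo.def hε, eventually_ge_atTop (1:ℝ)] with x hx hx1
    have hx' : |Real.log x ^ 5| ≤ Real.log 2 ^ 5 * |x| := by simpa using hx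
    rw [Real.logb, div_pow, div_le_iff₀ (by positivity)]
    calc Real.log x ^ 5 ≤ |Real.log x ^ 5| := le_abs_self _
      _ ≤ Real.log 2 ^ 5 * |x| := hx'
      _ = x * Real.log 2 ^ 5 := by rw [abs_of_nonneg (by linarith), mul_comm]
  have h3 : ∀ᶠ x : ℝ in atTop, 7 * (c + 2) ≤ (Real.logb 2 x) ^ 4 := by
    filter_upwards [(Real.tendsto_logb_atTop h1b).eventually_ge_atTop
      (max 1 (7 * (c + 2)))] with x hx
    have h1 : (1:ℝ) ≤ Real.logb 2 x := le_trans (le_max_left _ _) hx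
    calc 7 * (c + 2) ≤ max 1 (7 * (c + 2)) := le_max_right _ _
      _ ≤ Real.logb 2 x := hx
      _ ≤ (Real.logb 2 x) ^ 4 := le_self_pow₀ (by linarith) (by norm_num)
  obtain ⟨n₁, hn₁⟩ := eventually_atTop.mp
    (tendsto_natCast_atTop_atTop.eventually (h2.and h3))
  refine ⟨max n₁ 6, fun n hn N hN => ?_⟩
  have hn1 : n₁ ≤ n := le_trans (le_max_left _ _) hn
  have hn6 : 6 ≤ n := le_trans (le_max_right _ _) hn
  obtain ⟨hL5, hL4⟩ := hn₁ n hn1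
  set L := Real.logb 2 (n : ℝ) with hLdef
  have hnR : (6:ℝ) ≤ (n:ℝ) := by exact_mod_cast hn6
  have hn0 : (0:ℝ) < (n:ℝ) := by linarith
  have hL1 : (1:ℝ) ≤ L := by
    rw [hLdef, show (1:ℝ) = Real.logb 2 2 from (Real.logb_self_eq_one h1b).symm]
    exact Real.logb_le_logb_of_le h1b two_pos (by linarith)
  have hL5pos : (0:ℝ) < L ^ 5 := by positivity
  set s := ⌊6 * (n : ℝ) / L ^ 5⌋₊ with hsdef
  -- s ≤ n
  have hsle : s ≤ n := by
    have h6 : (6:ℝ) ≤ L ^ 5 := by nlinarith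
    have : 6 * (n:ℝ) / L ^ 5 ≤ (n:ℝ) := by
      rw [div_le_iff₀ hL5pos]; nlinarith
    calc s ≤ ⌊(n:ℝ)⌋₊ := Nat.floor_mono this
      _ = n := Nat.floor_natCast n
  set B := (N + 1) * (2 * n + 1) with hBdef
  have hB_lb : 2 * n + 1 ≤ B := by
    calc 2 * n + 1 = 1 * (2 * n + 1) := (one_mul _).symm
      _ ≤ B := Nat.mul_le_mul_right _ (by omega)
  -- Step A: each term ≤ B^s
  have hA : ∑ m ∈ Finset.range (s + 1), N.choose m * (2 * n + 1) ^ m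
      ≤ (s + 1) * B ^ s := by
    have hterm : ∀ m ∈ Finset.range (s + 1),
        N.choose m * (2 * n + 1) ^ m ≤ B ^ s := by
      intro m hm
      have hm' : m ≤ s := Nat.lt_succ_iff.mp (Finset.mem_range.mp hm)
      calc N.choose m * (2 * n + 1) ^ m ≤ (N + 1) ^ m * (2 * n + 1) ^ m := by
            exact Nat.mul_le_mul_right _
              (le_trans (Nat.choose_le_pow N m) (Nat.pow_le_pow_left (by omega) m))
        _ = B ^ m := by rw [hBdef, mul_pow]
        _ ≤ B ^ s := Nat.pow_le_pow_right (by positivity) hm'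
    calc ∑ m ∈ Finset.range (s + 1), N.choose m * (2 * n + 1) ^ m
        ≤ (Finset.range (s + 1)).card • B ^ s := Finset.sum_le_card_nsmul _ _ _ hterm
      _ = (s + 1) * B ^ s := by rw [Finset.card_range, smul_eq_mul]
  -- Step B: (s+1) * B^s ≤ B^(s+1)
  have hB2 : (s + 1) * B ^ s ≤ B ^ (s + 1) := by
    have h1 : s + 1 ≤ B := by omega
    calc (s + 1) * B ^ s ≤ B * B ^ s := Nat.mul_le_mul_right _ h1
      _ = B ^ (s + 1) := by rw [pow_succ, mul_comm]
  -- Step C: B^(s+1) ≤ 2^n, via reals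
  have hBR1 : (1:ℝ) ≤ (B:ℝ) := by
    have : 1 ≤ B := by omega
    exact_mod_cast this
  have hBRpos : (0:ℝ) < (B:ℝ) := by linarith
  have hrc1 : (1:ℝ) ≤ (n:ℝ) ^ c := by
    calc (1:ℝ) = 1 ^ c := (Real.one_rpow c).symm
      _ ≤ (n:ℝ) ^ c := Real.rpow_le_rpow zero_le_one (by linarith) hc.le
  have hBRle : (B:ℝ) ≤ (n:ℝ) ^ (c + 2) := by
    have hexp : (n:ℝ) ^ (c + 2) = (n:ℝ) ^ c * (n:ℝ) ^ (2:ℕ) := by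
      rw [Real.rpow_add hn0, ← Real.rpow_natCast (n:ℝ) 2]; norm_num
    have hcast : (B:ℝ) = ((N:ℝ) + 1) * (2 * (n:ℝ) + 1) := by
      rw [hBdef]; push_cast; ring
    rw [hcast, hexp]
    have h1 : (N:ℝ) + 1 ≤ 2 * (n:ℝ) ^ c := by linarith
    have h2 : 2 * (n:ℝ) + 1 ≤ 3 * (n:ℝ) := by linarith
    calc ((N:ℝ) + 1) * (2 * (n:ℝ) + 1) ≤ (2 * (n:ℝ) ^ c) * (3 * (n:ℝ)) := by
          apply mul_le_mul h1 h2 (by linarith) (by positivity)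
      _ = 6 * (n:ℝ) ^ c * (n:ℝ) := by ring
      _ ≤ (n:ℝ) ^ c * (n:ℝ) ^ (2:ℕ) := by
          have h6 := mul_le_mul_of_nonneg_left hnR
            (by positivity : (0:ℝ) ≤ (n:ℝ) ^ c * (n:ℝ))
          nlinarith [h6]
  have hlogB : Real.logb 2 (B:ℝ) ≤ (c + 2) * L := by
    calc Real.logb 2 (B:ℝ) ≤ Real.logb 2 ((n:ℝ) ^ (c + 2)) :=
          Real.logb_le_logb_of_le h1b hBRpos hBRle
      _ = (c + 2) * L := Real.logb_rpow_eq_mul_logb_of_pos hn0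
  have hlogBnn : 0 ≤ Real.logb 2 (B:ℝ) := Real.logb_nonneg h1b hBR1
  -- key estimate
  have hkey : ((s:ℝ) + 1) * Real.logb 2 (B:ℝ) ≤ (n:ℝ) := by
    have hs1 : (s:ℝ) + 1 ≤ 7 * (n:ℝ) / L ^ 5 := by
      have hfl : (s:ℝ) ≤ 6 * (n:ℝ) / L ^ 5 :=
        Nat.floor_le (by positivity)
      have hone : (1:ℝ) ≤ (n:ℝ) / L ^ 5 := (one_le_div hL5pos).mpr hL5
      have : 7 * (n:ℝ) / L ^ 5 = 6 * (n:ℝ) / L ^ 5 + (n:ℝ) / L ^ 5 := by ring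
      linarith
    have hLne : L ≠ 0 := by linarith
    calc ((s:ℝ) + 1) * Real.logb 2 (B:ℝ)
        ≤ (7 * (n:ℝ) / L ^ 5) * ((c + 2) * L) := by
          apply mul_le_mul hs1 hlogB hlogBnn (by positivity)
      _ = 7 * (c + 2) * (n:ℝ) / L ^ 4 := by field_simp
      _ ≤ (n:ℝ) := by
          rw [div_le_iff₀ (by positivity)]
          nlinarith
  have hC : (B:ℝ) ^ (s + 1) ≤ (2:ℝ) ^ n := by
    have e1 : (B:ℝ) ^ (s + 1)
        = (2:ℝ) ^ (Real.logb 2 (B:ℝ) * ((s + 1 : ℕ) : ℝ)) := by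
      rw [Real.rpow_mul (by norm_num : (0:ℝ) ≤ 2),
        Real.rpow_logb two_pos (by norm_num) hBRpos, Real.rpow_natCast]
    have e2 : (2:ℝ) ^ n = (2:ℝ) ^ ((n:ℕ) : ℝ) := (Real.rpow_natCast 2 n).symm
    rw [e1, e2]
    apply Real.rpow_le_rpow_left_iff h1b |>.mpr
    push_cast
    linarith [hkey]
  have hCnat : B ^ (s + 1) ≤ 2 ^ n := by
    have := hC
    exact_mod_cast this
  calc ∑ m ∈ Finset.range (s + 1), N.choose m * (2 * n + 1) ^ m
      ≤ (s + 1) * B ^ s := hA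
    _ ≤ B ^ (s + 1) := hB2
    _ ≤ 2 ^ n := hCnat
end

section
/- Let q be a prime, let n be a positive integer with n < q, let T be a finite set, let mult : T → {1, …, n} be multiplicities, and let f : T → W be a function into some set W that is NOT injective on T. Fix any map rep : f(T) → T with f(rep(v)) = v for every v in the image f(T), and for each v ∈ f(T) let c_v = Σ_{x ∈ T, f(x) = v} mult(x). If h : T → F_q assigns to the elements of T mutually independent uniformly random values in the field F_q, then Pr[ Σ_{x ∈ T} mult(x)·h(x) = Σ_{v ∈ f(T)} c_v·h(rep(v)) ] ≤ 1/q. -/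
open MeasureTheory

theorem card_linear_solutions {ι K : Type*} [Fintype ι] [DecidableEq ι] [Field K] [Fintype K]
    [DecidableEq K] (a : ι → K) (i0 : ι) (ha : a i0 ≠ 0) (c : K) :
    (Finset.univ.filter (fun g : ι → K => ∑ i, a i * g i = c)).card
      = Fintype.card K ^ (Fintype.card ι - 1) := by
  classical
  have hsub : ∀ F : ι → K, ∑ j : {i : ι // i ≠ i0}, F j.1 = ∑ j ∈ Finset.univ.erase i0, F j := by
    intro F
    refine (Finset.sum_subtype _ (fun x => ?_) F).symm
    simp [Finset.mem_erase]
  have hsplit : ∀ F : ι → K, ∑ i, F i = F i0 + ∑ j : {i : ι // i ≠ i0}, F j.1 := by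
    intro F
    rw [hsub]
    exact (Finset.add_sum_erase _ F (Finset.mem_univ i0)).symm
  have e : {g : ι → K // ∑ i, a i * g i = c} ≃ ({i : ι // i ≠ i0} → K) :=
    { toFun := fun g j => g.1 j.1
      invFun := fun v =>
        ⟨fun i => if hi : i = i0 then
            (c - ∑ j : {i : ι // i ≠ i0}, a j.1 * v j) * (a i0)⁻¹ else v ⟨i, hi⟩, by
          rw [hsplit (fun i => a i * _)]
          simp only [dif_pos rfl]
          have : ∀ j : {i : ι // i ≠ i0},
              a j.1 * (if hj : (j : ι) = i0 then
                (c - ∑ j : {i : ι // i ≠ i0}, a j.1 * v j) * (a i0)⁻¹ else v ⟨j.1, hj⟩)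
              = a j.1 * v j := by
            intro j; rw [dif_neg j.2]
          rw [Finset.sum_congr rfl (fun j _ => this j)]
          rw [dite_true]
          field_simp
          ring⟩
      left_inv := by
        rintro ⟨g, hg⟩
        ext i
        simp only
        split_ifs with hi
        · subst hi
          rw [hsplit (fun i => a i * g i)] at hg
          rw [hsub (fun x => a x * g x)] at hg
          rw [hsub (fun x => a x * g x)]
          have h3 : ∑ j : ι, a j * g j
              = a i * g i + ∑ j ∈ Finset.univ.erase i, a j * g j := by
            rw [hsplit (fun x => a x * g x), hsub (fun x => a x * g x)]
          field_simp
          linear_combination -hg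
        · rfl
      right_inv := by
        intro v
        ext j
        simp only [dif_neg j.2] }
  have h1 : (Finset.univ.filter (fun g : ι → K => ∑ i, a i * g i = c)).card
      = Fintype.card {g : ι → K // ∑ i, a i * g i = c} := (Fintype.card_subtype _).symm
  rw [h1, Fintype.card_congr e, Fintype.card_fun, Fintype.card_subtype]
  congr 1
  rw [Finset.filter_ne', Finset.card_erase_of_mem (Finset.mem_univ i0)]
  rfl

/-- Let `q` be prime, `0 < n < q`, `T` a finite set with multiplicities
`mult : T → {1,…,n}`, and `f : T → W` a map that is *not* injective on `T`. Fix a section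
`rep` of `f` on the image `f(T)` and let `c_v = Σ_{x ∈ T, f x = v} mult x`. If `h`
assigns to the elements of `T` mutually independent uniformly random values in `F_q`
(formalized: the joint distribution of `h` on `T` is uniform), then
`Pr[Σ_{x ∈ T} mult(x)·h(x) = Σ_{v ∈ f(T)} c_v·h(rep v)] ≤ 1/q`. -/
theorem verify_rejects
    {Ω : Type*} [MeasurableSpace Ω] (μ : Measure Ω) [IsProbabilityMeasure μ]
    (q n : ℕ) (hq : q.Prime) (hn : 0 < n) (hnq : n < q)
    {β W : Type*} [DecidableEq β] [DecidableEq W]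
    (T : Finset β) (mult : β → ℕ)
    (hmult : ∀ x ∈ T, 1 ≤ mult x ∧ mult x ≤ n)
    (f : β → W)
    (hnoninj : ∃ x ∈ T, ∃ y ∈ T, x ≠ y ∧ f x = f y)
    (rep : W → β)
    (hrep : ∀ v ∈ T.image f, rep v ∈ T ∧ f (rep v) = v)
    (h : Ω → β → ZMod q)
    (hunif : ∀ v : β → ZMod q,
      μ {ω | ∀ x ∈ T, h ω x = v x} = 1 / (q : ENNReal) ^ T.card) :
    μ {ω | ∑ x ∈ T, (mult x : ZMod q) * h ω x =
        ∑ v ∈ T.image f,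
          ((∑ x ∈ T.filter fun x => f x = v, mult x : ℕ) : ZMod q) * h ω (rep v)}
      ≤ 1 / (q : ENNReal) := by
  classical
  haveI : Fact q.Prime := ⟨hq⟩
  obtain ⟨x₀, hx₀T, y₀, hy₀T, hxy, hfxy⟩ := hnoninj
  set cc : W → ℕ := fun v => ∑ x ∈ T.filter fun x => f x = v, mult x with hcc
  set aβ : β → ZMod q := fun x =>
    (mult x : ZMod q) - (if rep (f x) = x then (cc (f x) : ZMod q) else 0) with haβ
  -- choose a point z where the coefficient is nonzero
  obtain ⟨z, hzT, hzrep⟩ : ∃ z ∈ T, rep (f z) ≠ z := by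
    by_cases hx : rep (f x₀) = x₀
    · exact ⟨y₀, hy₀T, by rw [← hfxy, hx]; exact hxy⟩
    · exact ⟨x₀, hx₀T, hx⟩
  have hmz : (mult z : ZMod q) ≠ 0 := by
    intro h0
    rw [ZMod.natCast_eq_zero_iff] at h0
    have h1 := (hmult z hzT).1
    have h2 := (hmult z hzT).2
    have := Nat.le_of_dvd (by omega) h0
    omega
  have haz : aβ z ≠ 0 := by
    rw [haβ]
    simpa [if_neg hzrep] using hmz
  -- extension of a tuple on T to all of β
  set ext : (↥T → ZMod q) → β → ZMod q :=
    fun g x => if hx : x ∈ T then g ⟨x, hx⟩ else 0 with hext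
  set A : (↥T → ZMod q) → Set Ω := fun g => {ω | ∀ x ∈ T, h ω x = ext g x} with hA
  set S : Finset (↥T → ZMod q) :=
    Finset.univ.filter (fun g => ∑ i : ↥T, aβ i.1 * g i = 0) with hS
  -- rewriting the right-hand side of the event as a sum over T
  have himg : ∀ u : β → ZMod q, ∑ v ∈ T.image f, (cc v : ZMod q) * u (rep v)
      = ∑ x ∈ T, (if rep (f x) = x then (cc (f x) : ZMod q) else 0) * u x := by
    intro u
    have : ∑ x ∈ T, (if rep (f x) = x then (cc (f x) : ZMod q) else 0) * u x
        = ∑ x ∈ T.filter (fun x => rep (f x) = x), (cc (f x) : ZMod q) * u x := by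
      rw [Finset.sum_filter]
      exact Finset.sum_congr rfl (fun x _ => by split_ifs <;> simp)
    rw [this]
    refine Finset.sum_nbij' (i := rep) (j := f) ?_ ?_ ?_ ?_ ?_
    · intro v hv
      rw [Finset.mem_filter]
      exact ⟨(hrep v hv).1, by rw [(hrep v hv).2]⟩
    · intro x hx
      exact Finset.mem_image_of_mem f (Finset.mem_filter.1 hx).1
    · intro v hv
      exact (hrep v hv).2
    · intro x hx
      exact (Finset.mem_filter.1 hx).2
    · intro v hv
      rw [(hrep v hv).2]
  -- the event is contained in the union of atoms over S
  have hsub : {ω | ∑ x ∈ T, (mult x : ZMod q) * h ω x =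
      ∑ v ∈ T.image f, (cc v : ZMod q) * h ω (rep v)} ⊆ ⋃ g ∈ S, A g := by
    intro ω hω
    set g : ↥T → ZMod q := fun i => h ω i.1 with hg
    have hAg : ω ∈ A g := fun x hx => by simp [hg, ext, hx]
    have hcond : ∑ i : ↥T, aβ i.1 * g i = 0 := by
      have h1 : ∑ i : ↥T, aβ i.1 * g i = ∑ x ∈ T, aβ x * h ω x :=
        Finset.sum_coe_sort T (fun x => aβ x * h ω x)
      rw [h1]
      simp only [haβ, sub_mul]
      rw [Finset.sum_sub_distrib, ← himg (h ω), sub_eq_zero]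
      exact hω
    have hgS : g ∈ S := Finset.mem_filter.2 ⟨Finset.mem_univ _, hcond⟩
    exact Set.mem_iUnion₂.2 ⟨g, hgS, hAg⟩
  -- bound the cardinality of S
  have hcard : S.card = q ^ (T.card - 1) := by
    rw [hS]
    rw [card_linear_solutions (fun i : ↥T => aβ i.1) ⟨z, hzT⟩ haz 0]
    rw [ZMod.card q, Fintype.card_coe]
  have hT1 : 1 ≤ T.card := Finset.card_pos.2 ⟨z, hzT⟩
  have hq0 : (q : ENNReal) ≠ 0 := by
    simp [hq.pos.ne']
  have hqt : (q : ENNReal) ≠ ⊤ := ENNReal.natCast_ne_top q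
  have hp0 : (q : ENNReal) ^ (T.card - 1) ≠ 0 := pow_ne_zero _ hq0
  have hpt : (q : ENNReal) ^ (T.card - 1) ≠ ⊤ := ENNReal.pow_ne_top hqt
  calc μ {ω | ∑ x ∈ T, (mult x : ZMod q) * h ω x =
        ∑ v ∈ T.image f, (cc v : ZMod q) * h ω (rep v)}
      ≤ μ (⋃ g ∈ S, A g) := measure_mono hsub
    _ ≤ ∑ g ∈ S, μ (A g) := measure_biUnion_finset_le S A
    _ = S.card * (1 / (q : ENNReal) ^ T.card) := by
        rw [Finset.sum_congr rfl (fun g _ => hunif (ext g)), Finset.sum_const,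
          nsmul_eq_mul]
    _ = (q : ENNReal) ^ (T.card - 1) * (1 / (q : ENNReal) ^ T.card) := by
        rw [hcard]; push_cast; ring
    _ = 1 / (q : ENNReal) := by
        have hpow : (q : ENNReal) ^ T.card = (q : ENNReal) ^ (T.card - 1) * q := by
          rw [← pow_succ]
          congr 1
          omega
        rw [one_div, one_div, hpow, ENNReal.mul_inv (Or.inl hp0) (Or.inl hpt),
          ← mul_assoc, ENNReal.mul_inv_cancel hp0 hpt, one_mul]
end
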